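/- arXiv:1708.06691 — 6 statements merged into one kernel-verified Lean document; each statement's English description precedes it below -/
import Mathlib

section
/- A digraph D is in-semicomplete if and only if for every vertex v and every pair of internally vertex-disjoint paths P and Q both ending at v, there exists a path R with vertex set V(P) ∪ V(Q) also ending at v. -/
/-!
Let `p`, `q` be internally disjoint paths ending at `v`, with last arcs `a → v` and `b → v`. In an
in-semicomplete digraph `a` and `b` are adjacent, say `a → b`. Then `p` with `v` replaced by `b`,
and `q` with `v` removed, are internally disjoint paths ending at `b` of smaller total length;
merging them by induction and appending `v` gives the required path. Conversely, merging the
paths `u v` and `w v` yields `u w v` or `w u v`, so `u` and `w` are adjacent.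
-/

open scoped Classical

namespace DigraphPaper

variable {V : Type*} [Fintype V] [DecidableEq V]

/-- Vertices `u` and `v` are adjacent in the digraph with arc relation `A`. -/
def DAdj (A : V → V → Prop) (u v : V) : Prop := A u v ∨ A v u

/-- A set of vertices is stable if its vertices are pairwise nonadjacent. -/
def DStable (A : V → V → Prop) (S : Set V) : Prop :=
  ∀ u ∈ S, ∀ v ∈ S, u ≠ v → ¬ DAdj A u v

/-- The in-neighborhood of every vertex induces a semicomplete digraph. -/
def InSemicomplete (A : V → V → Prop) : Prop :=
  ∀ v u w : V, A u v → A w v → u ≠ w → DAdj A u w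

/-- The out-neighborhood of every vertex induces a semicomplete digraph. -/
def OutSemicomplete (A : V → V → Prop) : Prop :=
  ∀ v u w : V, A v u → A v w → u ≠ w → DAdj A u w

/-- A path: a nonempty list of distinct vertices with consecutive arcs. -/
def IsPath (A : V → V → Prop) (p : List V) : Prop :=
  p ≠ [] ∧ p.Nodup ∧ p.Chain' A

/-- A collection of pairwise vertex-disjoint lists. -/
def PDisjoint (P : Finset (List V)) : Prop :=
  ∀ p ∈ P, ∀ q ∈ P, p ≠ q → ∀ x : V, x ∈ p → x ∉ q

/-- A path partition: vertex-disjoint paths covering all vertices. -/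
def IsPathPartition (A : V → V → Prop) (P : Finset (List V)) : Prop :=
  (∀ p ∈ P, IsPath A p) ∧ PDisjoint P ∧ ∀ v : V, ∃ p ∈ P, v ∈ p

/-- The k-norm of a collection of paths. -/
def knorm (k : ℕ) (P : Finset (List V)) : ℕ := ∑ p ∈ P, min p.length k

/-- The set of final vertices of the paths in `P`. -/
def pends (P : Finset (List V)) : Set V := {x | ∃ p ∈ P, p.getLast? = some x}

/-- A partial k-coloring: k pairwise disjoint stable sets. -/
def IsPartialKColoring (A : V → V → Prop) (k : ℕ) (C : Fin k → Finset V) : Prop :=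
  (∀ i, DStable A (C i : Set V)) ∧ ∀ i j, i ≠ j → Disjoint (C i) (C j)

/-- Orthogonality of a partial k-coloring to a path partition:
each path meets `min |P| k` distinct color classes. -/
def OrthoPC (k : ℕ) (C : Fin k → Finset V) (P : Finset (List V)) : Prop :=
  ∀ p ∈ P, min p.length k ≤ (Finset.univ.filter fun i : Fin k => ∃ x ∈ p, x ∈ C i).card

/-- A k-optimal path partition. -/
def KOptimal (A : V → V → Prop) (k : ℕ) (P : Finset (List V)) : Prop :=
  IsPathPartition A P ∧
    ∀ Q : Finset (List V), IsPathPartition A Q → knorm k P ≤ knorm k Q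

/-- A k-pack: at most k vertex-disjoint paths. -/
def IsKPack (A : V → V → Prop) (k : ℕ) (P : Finset (List V)) : Prop :=
  P.card ≤ k ∧ (∀ p ∈ P, IsPath A p) ∧ PDisjoint P

/-- Weight of a k-pack: number of covered vertices. -/
def weight (P : Finset (List V)) : ℕ := ∑ p ∈ P, p.length

/-- The set of vertices covered by the paths of `P`. -/
def cover (P : Finset (List V)) : Finset V := P.biUnion List.toFinset

/-- An optimal k-pack. -/
def OptimalKPack (A : V → V → Prop) (k : ℕ) (P : Finset (List V)) : Prop :=
  IsKPack A k P ∧ ∀ Q : Finset (List V), IsKPack A k Q → weight Q ≤ weight P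

/-- A coloring: a partition of the vertex set into stable sets. -/
def IsColoring (A : V → V → Prop) (C : Finset (Finset V)) : Prop :=
  (∀ c ∈ C, DStable A (c : Set V)) ∧ (∀ c ∈ C, c.Nonempty) ∧
  (∀ c ∈ C, ∀ c' ∈ C, c ≠ c' → Disjoint c c') ∧ ∀ v : V, ∃ c ∈ C, v ∈ c

/-- Orthogonality of a coloring to a k-pack:
each color class meets `min |C| k` distinct paths. -/
def OrthoCP (k : ℕ) (C : Finset (Finset V)) (P : Finset (List V)) : Prop :=
  ∀ c ∈ C, min c.card k ≤ (P.filter fun p => ∃ x ∈ c, x ∈ p).card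

/-- π_k(D): minimum k-norm of a path partition. -/
noncomputable def pik (A : V → V → Prop) (k : ℕ) : ℕ :=
  sInf {n | ∃ P : Finset (List V), IsPathPartition A P ∧ knorm k P = n}

/-- α_k(D): maximum weight of a partial k-coloring. -/
noncomputable def alphak (A : V → V → Prop) (k : ℕ) : ℕ :=
  sSup {n | ∃ C : Fin k → Finset V, IsPartialKColoring A k C ∧ ∑ i, (C i).card = n}

/-- π(D): minimum number of paths in a path partition. -/
noncomputable def piNum (A : V → V → Prop) : ℕ :=
  sInf {n | ∃ P : Finset (List V), IsPathPartition A P ∧ P.card = n}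

/-- α(D): maximum size of a stable set. -/
noncomputable def alphaNum (A : V → V → Prop) : ℕ :=
  sSup {n | ∃ S : Finset V, DStable A (S : Set V) ∧ S.card = n}

/-- k-norm of a coloring. -/
def cnorm (k : ℕ) (C : Finset (Finset V)) : ℕ := ∑ c ∈ C, min c.card k

/-- χ_k(D): minimum k-norm of a coloring. -/
noncomputable def chik (A : V → V → Prop) (k : ℕ) : ℕ :=
  sInf {n | ∃ C : Finset (Finset V), IsColoring A C ∧ cnorm k C = n}

/-- λ_k(D): maximum weight of a k-pack. -/
noncomputable def lamk (A : V → V → Prop) (k : ℕ) : ℕ :=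
  sSup {n | ∃ P : Finset (List V), IsKPack A k P ∧ weight P = n}

end DigraphPaper

namespace DigraphPaper

variable {V : Type*} {A : V → V → Prop}

theorem isPath_iff {p : List V} : IsPath A p ↔ p ≠ [] ∧ p.Nodup ∧ p.IsChain A := Iff.rfl

theorem isPath_concat_iff {p : List V} {a v : V} :
    IsPath A (p ++ [a] ++ [v]) ↔ IsPath A (p ++ [a]) ∧ v ∉ p ++ [a] ∧ A a v := by
  simp only [isPath_iff, List.nodup_append (l₂ := [v]), List.isChain_append (l₂ := [v])]
  grind

theorem isPath_pair {u v : V} (huv : u ≠ v) (h : A u v) : IsPath A [u, v] :=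
  ⟨by simp, by simp [huv], List.isChain_pair.2 h⟩

theorem dAdj_of_isPath_of_perm_pair {r : List V} {u w v : V} (hr : IsPath A (r ++ [v]))
    (hperm : r.Perm [u, w]) : DAdj A u w := by
  rcases List.perm_pair.1 hperm with rfl | rfl
  · exact .inl (List.isChain_cons_cons.1 hr.2.2).1
  · exact .inr (List.isChain_cons_cons.1 hr.2.2).1

theorem InSemicomplete.exists_perm_isPath (hA : InSemicomplete A) {v : V} {p q : List V}
    (hp : IsPath A (p ++ [v])) (hq : IsPath A (q ++ [v])) (hpq : p.Disjoint q) :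
    ∃ r, r.Perm (p ++ q) ∧ IsPath A (r ++ [v]) := by
  induction hn : p.length + q.length using Nat.strong_induction_on generalizing v p q with
  | _ n ih =>
  rcases p.eq_nil_or_concat' with rfl | ⟨p, a, rfl⟩
  · exact ⟨q, .rfl, hq⟩
  rcases q.eq_nil_or_concat' with rfl | ⟨q, b, rfl⟩
  · exact ⟨p ++ [a], by simp, hp⟩
  have hav := (isPath_concat_iff.1 hp).2.2
  have hbv := (isPath_concat_iff.1 hq).2.2
  have hab : a ≠ b := fun h => hpq (a := a) (by simp) (by simp [h])
  wlog hab' : A a b generalizing p q a b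
  · obtain ⟨r, hr, hrv⟩ := this q b hq p a hp hpq.symm (by simp at hn ⊢; omega) hbv hav
      hab.symm ((hA v a b hav hbv hab).resolve_left hab')
    exact ⟨r, hr.trans List.perm_append_comm, hrv⟩
  obtain ⟨hpa, hvp, -⟩ := isPath_concat_iff.1 hp
  obtain ⟨hqb, hvq, -⟩ := isPath_concat_iff.1 hq
  have hbp : b ∉ p ++ [a] := fun h => hpq h (by simp)
  obtain ⟨r, hr, hrb⟩ := ih _ (by simp at hn ⊢; omega) (isPath_concat_iff.2 ⟨hpa, hbp, hab'⟩)
    hqb (List.disjoint_append_right.1 hpq).1 rfl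
  have hperm : (r ++ [b]).Perm (p ++ [a] ++ (q ++ [b])) := by
    simpa using hr.append_right [b]
  have hvr : v ∉ r ++ [b] := by
    rw [hperm.mem_iff, List.mem_append]
    exact not_or.2 ⟨hvp, hvq⟩
  exact ⟨r ++ [b], hperm, isPath_concat_iff.2 ⟨hrb, hvr, hbv⟩⟩

end DigraphPaper

namespace DigraphPaper

variable {V : Type*} [Fintype V] [DecidableEq V]

theorem stmt0_general (A : V → V → Prop) :
    InSemicomplete A ↔
      ∀ (v : V) (p q : List V), IsPath A p → IsPath A q →
        p.getLast? = some v → q.getLast? = some v →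
        (∀ x : V, x ∈ p → x ∈ q → x = v) →
        ∃ r : List V, IsPath A r ∧ r.toFinset = p.toFinset ∪ q.toFinset ∧
          r.getLast? = some v := by
  refine ⟨fun hA v p q hp hq hpv hqv hpq => ?_, fun hmerge v u w huv hwv huw => ?_⟩
  · obtain ⟨p, rfl⟩ := List.getLast?_eq_some_iff.1 hpv
    obtain ⟨q, rfl⟩ := List.getLast?_eq_some_iff.1 hqv
    have hvp : v ∉ p := fun h => (List.nodup_append.1 hp.2.1).2.2 v h v (by simp) rfl
    obtain ⟨r, hr, hrv⟩ := hA.exists_perm_isPath hp hq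
      fun x hxp hxq => hvp (hpq x (by simp [hxp]) (by simp [hxq]) ▸ hxp)
    refine ⟨r ++ [v], hrv, ?_, by simp⟩
    ext
    simp [hr.mem_iff]
  · by_cases hu : u = v
    · exact .inr (hu ▸ hwv)
    by_cases hw : w = v
    · exact .inl (hw ▸ huv)
    obtain ⟨r, hr, hrfin, hrv⟩ := hmerge v [u, v] [w, v] (isPath_pair hu huv) (isPath_pair hw hwv)
      rfl rfl (by simp; tauto)
    obtain ⟨r, rfl⟩ := List.getLast?_eq_some_iff.1 hrv
    have hperm : (r ++ [v]).Perm ([u, w] ++ [v]) :=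
      List.perm_of_nodup_nodup_toFinset_eq hr.2.1 (by simp [*]) (by rw [hrfin]; ext; simp; tauto)
    exact dAdj_of_isPath_of_perm_pair hr (List.perm_append_right_iff _ |>.1 hperm)

/-- A digraph is in-semicomplete iff every pair of internally vertex-disjoint
paths ending at a common vertex `v` can be merged into one path ending at `v`. -/
theorem stmt0 (A : V → V → Prop) (hirr : Irreflexive A) :
    InSemicomplete A ↔
      ∀ (v : V) (p q : List V), IsPath A p → IsPath A q →
        p.getLast? = some v → q.getLast? = some v →
        (∀ x : V, x ∈ p → x ∈ q → x = v) →
        ∃ r : List V, IsPath A r ∧ r.toFinset = p.toFinset ∪ q.toFinset ∧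
          r.getLast? = some v :=
  stmt0_general A

end DigraphPaper
end

section
/- Let P and Q be two vertex-disjoint paths in an in-semicomplete digraph D such that the last vertex of P is adjacent to the last vertex of Q. Then there exists a path R in D with V(R) = V(P) ∪ V(Q) whose last vertex is the last vertex of P or of Q. -/
open scoped Classical

namespace DigraphPaper

variable {V : Type*} [Fintype V] [DecidableEq V]

omit [Fintype V] [DecidableEq V] in
theorem IsPath.append_singleton {A : V → V → Prop} {r : List V} {z u : V} (hr : IsPath A r)
    (hz : r.getLast? = some z) (hzu : A z u) (hu : u ∉ r) : IsPath A (r ++ [u]) := by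
  obtain ⟨hne, hnd, hch⟩ := hr
  refine ⟨by simp, by rw [← List.concat_eq_append, List.nodup_concat]; exact ⟨hu, hnd⟩, ?_⟩
  exact List.IsChain.append hch (List.IsChain.singleton u) (by simp [hz, hzu])

omit [Fintype V] [DecidableEq V] in
theorem IsPath.of_append_singleton {A : V → V → Prop} {p : List V} {u : V}
    (h : IsPath A (p ++ [u])) (hp : p ≠ []) : IsPath A p :=
  ⟨hp, h.2.1.sublist (List.sublist_append_left p [u]), h.2.2.left_of_append⟩

omit [Fintype V] [DecidableEq V] in
theorem IsPath.rel_getLast_append_singleton {A : V → V → Prop} {p : List V} {u' u : V}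
    (h : IsPath A (p ++ [u])) (hu' : p.getLast? = some u') : A u' u :=
  (List.isChain_append.1 h.2.2).2.2 u' hu' u rfl

omit [Fintype V] in
/-- Drop the last vertex `u` of `P`: its predecessor `u'` and `w` both dominate `u`, so they are
adjacent by in-semicompleteness, and a merged path of `P - u` and `Q` ends at `u'` or `w`,
whence it extends by `u`. -/
theorem exists_path_merge_of_arc {A : V → V → Prop} (hin : InSemicomplete A) {p q : List V}
    {u w : V} (hp : IsPath A p) (hq : IsPath A q) (hdisj : ∀ x ∈ p, x ∉ q)
    (hu : p.getLast? = some u) (hw : q.getLast? = some w) (hwu : A w u) :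
    ∃ r, IsPath A r ∧ r.toFinset = p.toFinset ∪ q.toFinset ∧ r.getLast? = some u := by
  set p' := p.dropLast
  have hpu : p' ++ [u] = p := List.dropLast_append_getLast? u hu
  rw [← hpu] at hp hdisj ⊢
  have hup' : u ∉ p' := by
    have := hp.2.1
    rw [← List.concat_eq_append, List.nodup_concat] at this
    exact this.1
  have huq : u ∉ q := hdisj u (by simp)
  suffices ∃ r, IsPath A r ∧ r.toFinset = p'.toFinset ∪ q.toFinset ∧ ∃ z ∈ r.getLast?, A z u by
    obtain ⟨r, hr, hrV, z, hz, hzu⟩ := this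
    have hur : u ∉ r := by
      rw [← List.mem_toFinset, hrV, Finset.mem_union, List.mem_toFinset, List.mem_toFinset]
      exact fun h => h.elim hup' huq
    refine ⟨r ++ [u], hr.append_singleton hz hzu hur, ?_, by simp⟩
    rw [List.toFinset_append, hrV, List.toFinset_append, Finset.union_right_comm]
  rcases eq_or_ne p' [] with hp' | hp'
  · exact ⟨q, hq, by simp [hp'], w, hw, hwu⟩
  obtain ⟨u', hu'⟩ := Option.ne_none_iff_exists'.1 (mt List.getLast?_eq_none_iff.1 hp')
  have hu'u : A u' u := hp.rel_getLast_append_singleton hu'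
  have hu'w : u' ≠ w := fun h =>
    hdisj u' (by simp [List.mem_of_mem_getLast? hu']) (h ▸ List.mem_of_mem_getLast? hw)
  have hdisj' : ∀ x ∈ p', x ∉ q := fun x hx => hdisj x (by simp [hx])
  rcases hin u u' w hu'u hwu hu'w with h | h
  · obtain ⟨r, hr, hrV, hr_last⟩ := exists_path_merge_of_arc hin hq (hp.of_append_singleton hp')
      (fun x hxq hxp => hdisj' x hxp hxq) hw hu' h
    exact ⟨r, hr, by rw [hrV, Finset.union_comm], w, hr_last, hwu⟩
  · obtain ⟨r, hr, hrV, hr_last⟩ := exists_path_merge_of_arc hin (hp.of_append_singleton hp') hq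
      hdisj' hu' hw h
    exact ⟨r, hr, hrV, u', hr_last, hu'u⟩
termination_by p.length + q.length
decreasing_by
  all_goals
    have := List.length_pos_of_mem (List.mem_of_mem_getLast? hu)
    simp only [List.length_dropLast]
    omega

theorem stmt1_general (A : V → V → Prop) (hin : InSemicomplete A)
    (p q : List V) (u w : V) (hp : IsPath A p) (hq : IsPath A q)
    (hdisj : ∀ x : V, x ∈ p → x ∉ q)
    (hu : p.getLast? = some u) (hw : q.getLast? = some w)
    (hadj : DAdj A u w) :
    ∃ r : List V, IsPath A r ∧ r.toFinset = p.toFinset ∪ q.toFinset ∧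
      (r.getLast? = some u ∨ r.getLast? = some w) := by
  rcases hadj with huw | hwu
  · obtain ⟨r, hr, hrV, hr_last⟩ :=
      exists_path_merge_of_arc hin hq hp (fun x hxq hxp => hdisj x hxp hxq) hw hu huw
    exact ⟨r, hr, by rw [hrV, Finset.union_comm], Or.inr hr_last⟩
  · obtain ⟨r, hr, hrV, hr_last⟩ := exists_path_merge_of_arc hin hp hq hdisj hu hw hwu
    exact ⟨r, hr, hrV, Or.inl hr_last⟩

/-- Two vertex-disjoint paths with adjacent last vertices in an in-semicomplete
digraph can be merged into a path ending at one of the two last vertices. -/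
theorem stmt1 (A : V → V → Prop) (hirr : Irreflexive A) (hin : InSemicomplete A)
    (p q : List V) (u w : V) (hp : IsPath A p) (hq : IsPath A q)
    (hdisj : ∀ x : V, x ∈ p → x ∉ q)
    (hu : p.getLast? = some u) (hw : q.getLast? = some w)
    (hadj : DAdj A u w) :
    ∃ r : List V, IsPath A r ∧ r.toFinset = p.toFinset ∪ q.toFinset ∧
      (r.getLast? = some u ∨ r.getLast? = some w) :=
  stmt1_general A hin p q u w hp hq hdisj hu hw hadj

end DigraphPaper
end

section
/- Let D be an in-semicomplete digraph, k a positive integer, and P a path partition of D. Then there exists a path partition Q of D such that either (i) |Q|_k < |P|_k and e(Q) is a proper subset of e(P), or (ii) |Q|_k = |P|_k, e(Q) ⊆ e(P), e(Q) is a stable set, and every partial k-coloring of D orthogonal to Q is also orthogonal to P. -/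
/-!
If the ends `u`, `v` of two distinct paths `p`, `q` are adjacent, say `u → v`, the two paths
can be merged into one path on `V(p) ∪ V(q)` ending at `v`. Let `b` be the first vertex of `q`
with `u → b` (there is one, as `u → v`). If `b` has a predecessor `a` on `q`, then `a` and `u`
are in-neighbours of `b`, hence adjacent, and the choice of `b` forces `a → u`: merge `p` with
the segment of `q` ending at `a` recursively (the result ends at `u`) and append the rest of `q`
from `b` on.

A merge removes a path and an end. Since `min (m + n) k ≤ min m k + min n k`, the k-norm does
not grow; if it stays the same, a partial colouring meeting `min |r| k` classes on the merged
path `r` meets `min |p| k` and `min |q| k` classes on `p` and `q`, because a path with `n`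
vertices meets at most `min n k` classes. Merging until the ends are stable gives the theorem.
-/

open scoped Classical

namespace DigraphPaper

variable {V : Type*} [Fintype V] [DecidableEq V]

section Paths

variable {A : V → V → Prop}

omit [Fintype V] [DecidableEq V] in
theorem InSemicomplete.exists_split (hin : InSemicomplete A) {u v : V} :
    ∀ {q : List V}, q.IsChain A → u ∉ q → q.getLast? = some v → A u v →
      ∃ q₁ b q₂, q = q₁ ++ b :: q₂ ∧ A u b ∧ ∀ a ∈ q₁.getLast?, A a u
  | [], _, _, hv, _ => by simp at hv
  | [c], _, _, hv, huv => ⟨[], c, [], rfl, by simp_all, by simp⟩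
  | c :: d :: q, hq, hu, hv, huv => by
    by_cases huc : A u c
    · exact ⟨[], c, d :: q, rfl, huc, by simp⟩
    obtain ⟨hcd, hq'⟩ := List.isChain_cons_cons.1 hq
    obtain ⟨q₁, b, q₂, hsplit, hub, hq₁⟩ := InSemicomplete.exists_split hin hq'
      (fun h => hu (.tail _ h)) (by rwa [List.getLast?_cons_cons] at hv) huv
    refine ⟨c :: q₁, b, q₂, by rw [hsplit]; rfl, hub, ?_⟩
    cases q₁ with
    | nil =>
      obtain ⟨rfl, -⟩ := List.cons_eq_cons.1 hsplit
      have hcu : c ≠ u := fun h => hu (h ▸ List.mem_cons_self)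
      simpa using (hin d c u hcd hub hcu).resolve_right huc
    | cons a q₁ => simpa [List.getLast?_cons_cons] using hq₁

omit [Fintype V] [DecidableEq V] in
theorem InSemicomplete.exists_chain_perm_append (hin : InSemicomplete A) {p q : List V}
    {u v : V} (hp : p.IsChain A) (hq : q.IsChain A) (hpq : (p ++ q).Nodup)
    (hu : p.getLast? = some u) (hv : q.getLast? = some v) (huv : A u v) :
    ∃ r : List V, r.IsChain A ∧ r.Perm (p ++ q) ∧ r.getLast? = some v := by
  have huq : u ∉ q := fun h => (List.nodup_append.1 hpq).2.2 u (List.mem_of_getLast? hu) u h rfl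
  obtain ⟨q₁, b, q₂, rfl, hub, hq₁u⟩ := hin.exists_split hq huq hv huv
  obtain ⟨hq₁, hbq₂, -⟩ := List.isChain_append.1 hq
  obtain ⟨r, hr, hperm, hlast⟩ :
      ∃ r : List V, r.IsChain A ∧ r.Perm (p ++ q₁) ∧ r.getLast? = some u := by
    cases ha : q₁.getLast? with
    | none => exact ⟨p, hp, by simp [List.getLast?_eq_none_iff.1 ha], hu⟩
    | some a =>
      have hnd : (q₁ ++ p).Nodup := List.perm_append_comm.nodup_iff.1
        (hpq.sublist (by simp))
      obtain ⟨r, hr, hperm, hlast⟩ := hin.exists_chain_perm_append hq₁ hp hnd ha hu (hq₁u a ha)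
      exact ⟨r, hr, hperm.trans List.perm_append_comm, hlast⟩
  refine ⟨r ++ b :: q₂, List.isChain_append.2 ⟨hr, hbq₂, ?_⟩,
    by simpa using hperm.append_right (b :: q₂), ?_⟩
  · simpa [hlast] using hub
  · rwa [List.getLast?_append_of_ne_nil _ (List.cons_ne_nil _ _)] at hv ⊢
termination_by p.length + q.length
decreasing_by subst_vars; simp only [List.length_append, List.length_cons]; omega

end Paths

section Partitions

variable {A : V → V → Prop} {P : Finset (List V)} {p q r : List V}

omit [Fintype V] [DecidableEq V] in
theorem IsPathPartition.exists_isPath_perm_append (hin : InSemicomplete A)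
    (hP : IsPathPartition A P) (hp : p ∈ P) (hq : q ∈ P) (hpq : p ≠ q) {u v : V}
    (hu : p.getLast? = some u) (hv : q.getLast? = some v) (huv : DAdj A u v) :
    ∃ r : List V, IsPath A r ∧ r.Perm (p ++ q) ∧ (r.getLast? = some u ∨ r.getLast? = some v) := by
  obtain ⟨hpne, hpnd, hpc⟩ := hP.1 p hp
  obtain ⟨-, hqnd, hqc⟩ := hP.1 q hq
  have hnd : (p ++ q).Nodup := List.nodup_append.2
    ⟨hpnd, hqnd, fun x hx y hy hxy => hP.2.1 p hp q hq hpq x hx (hxy ▸ hy)⟩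
  suffices ∃ r : List V, r.IsChain A ∧ r.Perm (p ++ q) ∧
      (r.getLast? = some u ∨ r.getLast? = some v) by
    obtain ⟨r, hr, hperm, hlast⟩ := this
    have hrne : r ≠ [] := List.ne_nil_of_length_pos <| by
      simp [hperm.length_eq, List.length_pos_iff.2 hpne]
    exact ⟨r, ⟨hrne, hperm.nodup_iff.2 hnd, hr⟩, hperm, hlast⟩
  rcases huv with h | h
  · obtain ⟨r, hr, hperm, hlast⟩ := hin.exists_chain_perm_append hpc hqc hnd hu hv h
    exact ⟨r, hr, hperm, .inr hlast⟩
  · obtain ⟨r, hr, hperm, hlast⟩ :=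
      hin.exists_chain_perm_append hqc hpc (List.perm_append_comm.nodup_iff.1 hnd) hv hu h
    exact ⟨r, hr, hperm.trans List.perm_append_comm, .inl hlast⟩

def replacePair (P : Finset (List V)) (p q r : List V) : Finset (List V) :=
  insert r ((P.erase p).erase q)

omit [Fintype V] in
theorem mem_replacePair {s : List V} :
    s ∈ replacePair P p q r ↔ s = r ∨ s ≠ q ∧ s ≠ p ∧ s ∈ P := by
  simp [replacePair]

omit [Fintype V] [DecidableEq V] in
theorem PDisjoint.not_mem_of_mem_perm (hP : PDisjoint P) (hp : p ∈ P) (hq : q ∈ P)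
    (hperm : r.Perm (p ++ q)) ⦃s : List V⦄ (hs : s ∈ P) (hsp : s ≠ p) (hsq : s ≠ q) ⦃x : V⦄
    (hx : x ∈ r) : x ∉ s := by
  rcases List.mem_append.1 (hperm.mem_iff.1 hx) with h | h
  · exact hP p hp s hs (Ne.symm hsp) x h
  · exact hP q hq s hs (Ne.symm hsq) x h

omit [Fintype V] in
theorem IsPathPartition.replacePair_of_perm (hP : IsPathPartition A P) (hp : p ∈ P) (hq : q ∈ P)
    (hr : IsPath A r) (hperm : r.Perm (p ++ q)) :
    IsPathPartition A (replacePair P p q r) := by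
  have hdisj := hP.2.1.not_mem_of_mem_perm hp hq hperm
  refine ⟨fun s hs => ?_, fun s hs t ht hst x hxs => ?_, fun x => ?_⟩
  · rcases mem_replacePair.1 hs with rfl | ⟨-, -, hs⟩
    exacts [hr, hP.1 s hs]
  · rcases mem_replacePair.1 hs with hsr | ⟨hsq, hsp, hs⟩ <;>
      rcases mem_replacePair.1 ht with htr | ⟨htq, htp, ht⟩
    · exact absurd (hsr.trans htr.symm) hst
    · exact hdisj ht htp htq (hsr ▸ hxs)
    · exact fun hxt => hdisj hs hsp hsq (htr ▸ hxt) hxs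
    · exact hP.2.1 s hs t ht hst x hxs
  · obtain ⟨s, hs, hxs⟩ := hP.2.2 x
    by_cases hsr : s = p ∨ s = q
    · refine ⟨r, mem_replacePair.2 (.inl rfl), hperm.mem_iff.2 ?_⟩
      rcases hsr with rfl | rfl <;> simp [hxs]
    · push Not at hsr
      exact ⟨s, mem_replacePair.2 (.inr ⟨hsr.2, hsr.1, hs⟩), hxs⟩

omit [Fintype V] in
theorem knorm_replacePair_add (k : ℕ) (hP : PDisjoint P) (hp : p ∈ P) (hq : q ∈ P)
    (hpq : p ≠ q) (hpne : p ≠ []) (hperm : r.Perm (p ++ q)) :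
    knorm k (replacePair P p q r) + (min p.length k + min q.length k) =
      knorm k P + min r.length k := by
  have hr : r ∉ (P.erase p).erase q := by
    intro h
    obtain ⟨hrq, hrp, hrP⟩ := by simpa using h
    obtain ⟨x, hx⟩ := List.exists_mem_of_ne_nil p hpne
    have hxr := hperm.mem_iff.2 (List.mem_append_left q hx)
    exact hP.not_mem_of_mem_perm hp hq hperm hrP hrp hrq hxr hxr
  have hq' : q ∈ P.erase p := Finset.mem_erase.2 ⟨hpq.symm, hq⟩
  rw [knorm, knorm, replacePair, Finset.sum_insert hr, ← Finset.add_sum_erase _ _ hp,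
    ← Finset.add_sum_erase _ _ hq']
  ring

omit [Fintype V] in
theorem pends_replacePair_ssubset (hP : PDisjoint P) (hp : p ∈ P) (hq : q ∈ P) {u v : V}
    (hu : p.getLast? = some u) (hv : q.getLast? = some v) (huv : u ≠ v)
    (hperm : r.Perm (p ++ q)) (hr : r.getLast? = some u ∨ r.getLast? = some v) :
    pends (replacePair P p q r) ⊂ pends P := by
  have hdisj := hP.not_mem_of_mem_perm hp hq hperm
  have hsub : pends (replacePair P p q r) ⊆ pends P := by
    rintro x ⟨s, hs, hx⟩
    rcases mem_replacePair.1 hs with rfl | ⟨-, -, hs⟩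
    · rcases hr with h | h <;> rw [h, Option.some_inj] at hx <;> subst hx
      exacts [⟨p, hp, hu⟩, ⟨q, hq, hv⟩]
    · exact ⟨s, hs, hx⟩
  have hends : ∀ x ∈ r, x ∈ pends (replacePair P p q r) → r.getLast? = some x := by
    rintro x hxr ⟨s, hs, hx⟩
    rcases mem_replacePair.1 hs with rfl | ⟨hsq, hsp, hs⟩
    exacts [hx, absurd (List.mem_of_getLast? hx) (hdisj hs hsp hsq hxr)]
  refine ⟨hsub, fun h => huv ?_⟩
  have hur : u ∈ r := hperm.mem_iff.2 (List.mem_append_left q (List.mem_of_getLast? hu))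
  have hvr : v ∈ r := hperm.mem_iff.2 (List.mem_append_right p (List.mem_of_getLast? hv))
  exact Option.some_inj.1 <| (hends u hur (h ⟨p, hp, hu⟩)).symm.trans
    (hends v hvr (h ⟨q, hq, hv⟩))

end Partitions

section Colorings

variable {k : ℕ} {C : Fin k → Finset V}

-- `OrthoPC k C P` unfolds to `∀ p ∈ P, min p.length k ≤ (classesMeeting C p).card`.
def classesMeeting (C : Fin k → Finset V) (l : List V) : Finset (Fin k) :=
  Finset.univ.filter fun i : Fin k => ∃ x ∈ l, x ∈ C i

omit [Fintype V] in
theorem classesMeeting_append (l₁ l₂ : List V) :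
    classesMeeting C (l₁ ++ l₂) = classesMeeting C l₁ ∪ classesMeeting C l₂ := by
  ext i
  simp [classesMeeting, or_and_right, exists_or]

omit [Fintype V] in
theorem card_classesMeeting_le (hC : ∀ i j, i ≠ j → Disjoint (C i) (C j)) (l : List V) :
    (classesMeeting C l).card ≤ min l.length k := by
  refine le_min ?_ ((Finset.card_filter_le _ _).trans (by simp))
  have hsub : classesMeeting C l ⊆
      l.toFinset.biUnion fun x => Finset.univ.filter fun i : Fin k => x ∈ C i := by
    intro i hi
    obtain ⟨x, hx, hxi⟩ := (Finset.mem_filter.1 hi).2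
    exact Finset.mem_biUnion.2 ⟨x, List.mem_toFinset.2 hx, by simpa using hxi⟩
  have hone : ∀ x : V, (Finset.univ.filter fun i : Fin k => x ∈ C i).card ≤ 1 := by
    refine fun x => Finset.card_le_one.2 fun i hi j hj => ?_
    by_contra hij
    exact Finset.disjoint_left.1 (hC i j hij) (by simpa using hi) (by simpa using hj)
  calc (classesMeeting C l).card
      ≤ ∑ x ∈ l.toFinset, (Finset.univ.filter fun i : Fin k => x ∈ C i).card :=
        (Finset.card_le_card hsub).trans Finset.card_biUnion_le
    _ ≤ ∑ _x ∈ l.toFinset, 1 := Finset.sum_le_sum fun x _ => hone x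
    _ ≤ l.length := by simpa using List.toFinset_card_le l

omit [Fintype V] in
theorem le_card_classesMeeting_of_perm_append (hC : ∀ i j, i ≠ j → Disjoint (C i) (C j))
    {p q r : List V} (hperm : r.Perm (p ++ q))
    (hnorm : min r.length k = min p.length k + min q.length k)
    (h : min r.length k ≤ (classesMeeting C r).card) :
    min p.length k ≤ (classesMeeting C p).card ∧ min q.length k ≤ (classesMeeting C q).card := by
  have hr : classesMeeting C r = classesMeeting C p ∪ classesMeeting C q := by
    rw [← classesMeeting_append]
    ext i
    simp [classesMeeting, hperm.mem_iff]
  have := card_classesMeeting_le hC p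
  have := card_classesMeeting_le hC q
  have := Finset.card_union_le (classesMeeting C p) (classesMeeting C q)
  rw [hr] at h
  omega

omit [Fintype V] in
theorem OrthoPC.of_replacePair {P : Finset (List V)} {p q r : List V}
    (hQ : OrthoPC k C (replacePair P p q r))
    (hp : min p.length k ≤ (classesMeeting C p).card)
    (hq : min q.length k ≤ (classesMeeting C q).card) : OrthoPC k C P := by
  intro s hs
  by_cases hsp : s = p
  · exact hsp ▸ hp
  by_cases hsq : s = q
  · exact hsq ▸ hq
  exact hQ s (mem_replacePair.2 (.inr ⟨hsq, hsp, hs⟩))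

end Colorings

omit [Fintype V] in
theorem IsPathPartition.exists_merge_of_not_stable {A : V → V → Prop} {P : Finset (List V)}
    (hin : InSemicomplete A) (hP : IsPathPartition A P) (k : ℕ) (hst : ¬DStable A (pends P)) :
    ∃ Q, IsPathPartition A Q ∧ Q.card < P.card ∧ pends Q ⊂ pends P ∧ knorm k Q ≤ knorm k P ∧
      (knorm k Q = knorm k P → ∀ C : Fin k → Finset V, IsPartialKColoring A k C →
        OrthoPC k C Q → OrthoPC k C P) := by
  obtain ⟨u, ⟨p, hp, hu⟩, v, ⟨q, hq, hv⟩, huv, hadj⟩ :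
      ∃ u ∈ pends P, ∃ v ∈ pends P, u ≠ v ∧ DAdj A u v := by
    simpa [DStable] using hst
  have hpq : p ≠ q := by
    rintro rfl
    exact huv (Option.some_inj.1 (hu.symm.trans hv))
  obtain ⟨r, hr, hperm, hlast⟩ := hP.exists_isPath_perm_append hin hp hq hpq hu hv hadj
  have hnorm := knorm_replacePair_add k hP.2.1 hp hq hpq (hP.1 p hp).1 hperm
  have hlen : r.length = p.length + q.length := hperm.length_eq.trans List.length_append
  have hcard : (replacePair P p q r).card < P.card := by
    have hq' : q ∈ P.erase p := Finset.mem_erase.2 ⟨hpq.symm, hq⟩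
    calc (replacePair P p q r).card ≤ ((P.erase p).erase q).card + 1 := Finset.card_insert_le _ _
      _ = (P.erase p).card := Finset.card_erase_add_one hq'
      _ < P.card := Finset.card_erase_lt_of_mem hp
  refine ⟨replacePair P p q r, hP.replacePair_of_perm hp hq hr hperm, hcard,
    pends_replacePair_ssubset hP.2.1 hp hq hu hv huv hperm hlast, by omega,
    fun heq C hC hQ => ?_⟩
  obtain ⟨hpC, hqC⟩ := le_card_classesMeeting_of_perm_append hC.2 hperm (by omega)
    (hQ r (mem_replacePair.2 (.inl rfl)))
  exact hQ.of_replacePair hpC hqC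

theorem stmt2_general (A : V → V → Prop) (hin : InSemicomplete A)
    (k : ℕ) (P : Finset (List V)) (hP : IsPathPartition A P) :
    ∃ Q : Finset (List V), IsPathPartition A Q ∧
      ((knorm k Q < knorm k P ∧ pends Q ⊂ pends P) ∨
       (knorm k Q = knorm k P ∧ pends Q ⊆ pends P ∧ DStable A (pends Q) ∧
        ∀ C : Fin k → Finset V, IsPartialKColoring A k C →
          OrthoPC k C Q → OrthoPC k C P)) := by
  induction hn : P.card using Nat.strong_induction_on generalizing P with
  | _ n ih =>
  by_cases hst : DStable A (pends P)
  · exact ⟨P, hP, .inr ⟨rfl, subset_rfl, hst, fun _ _ h => h⟩⟩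
  obtain ⟨Q₀, hQ₀, hcard, hends, hle, hortho₀⟩ := hP.exists_merge_of_not_stable hin k hst
  obtain ⟨Q, hQ, ⟨hlt, hsub⟩ | ⟨heq, hsub, hstab, hortho⟩⟩ := ih _ (hn ▸ hcard) Q₀ hQ₀ rfl
  · exact ⟨Q, hQ, .inl ⟨hlt.trans_le hle, hsub.trans hends⟩⟩
  rcases hle.lt_or_eq with hlt₀ | heq₀
  · exact ⟨Q, hQ, .inl ⟨heq ▸ hlt₀, hsub.trans_ssubset hends⟩⟩
  · exact ⟨Q, hQ, .inr ⟨heq.trans heq₀, hsub.trans hends.subset, hstab,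
      fun C hC h => hortho₀ heq₀ C hC (hortho C hC h)⟩⟩

/-- Lemma 1: any path partition of an in-semicomplete digraph can be converted
into one with smaller k-norm and fewer endpoints, or one with equal k-norm,
stable endpoint set, and preserving orthogonal partial k-colorings. -/
theorem stmt2 (A : V → V → Prop) (hirr : Irreflexive A) (hin : InSemicomplete A)
    (k : ℕ) (hk : 0 < k) (P : Finset (List V)) (hP : IsPathPartition A P) :
    ∃ Q : Finset (List V), IsPathPartition A Q ∧
      ((knorm k Q < knorm k P ∧ pends Q ⊂ pends P) ∨
       (knorm k Q = knorm k P ∧ pends Q ⊆ pends P ∧ DStable A (pends Q) ∧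
        ∀ C : Fin k → Finset V, IsPartialKColoring A k C →
          OrthoPC k C Q → OrthoPC k C P)) :=
  stmt2_general A hin k P hP

end DigraphPaper
end

section
/- If P is a k-optimal path partition of an out-semicomplete digraph D, then there exists a partial k-coloring of D orthogonal to P (i.e., Berge's Conjecture holds for out-semicomplete digraphs). -/
open scoped Classical

namespace DigraphPaper

variable {V : Type*} [Fintype V] [DecidableEq V]

/-!
We prove more generally that every `k`-optimal path partition `P` of a vertex set `W` has an
orthogonal partial `k`-colouring with colour classes inside `W`, by induction on `k` and, for
fixed `k`, on the number of paths. Paths are read from their first vertex, their head.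

If the head of one path has an arc to the head of another, the two paths can be merged into one:
two paths leaving a common vertex interleave into a single path because the two next vertices,
being out-neighbours of that vertex, are adjacent. By `k`-optimality the merged path has at most
`k` vertices, so the new partition is still `k`-optimal, and a colouring orthogonal to it gives
every vertex of the merged path its own colour, hence is orthogonal to both original paths.

Otherwise the set `S` of heads is stable and becomes the new colour class; it remains to see that
the tails form a `(k-1)`-optimal partition of `W \ S`. Let `Q` be a `(k-1)`-optimal partition of
`W \ S` and `t ∈ Q` a path with at least `k` vertices. The predecessor, along `P`, of the first
vertex of `t` is not on another path of `Q` (merging would lower the norm), so it is in `S` or on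
`t`; in the second case a rotation makes `t` start there. Repeating, `t` ends up starting at the
second vertex of a path of `P`, whose head can be prepended. Doing this for every long path and
adding the other heads as singletons yields a partition of `W` whose `k`-norm is the
`(k-1)`-norm of `Q` plus `|S|`, while the `k`-norm of `P` is the `(k-1)`-norm of its tails
plus `|S|`.
-/

section Lists

variable {α : Type*} {R : α → α → Prop}

theorem IsPath.ne_nil {l : List α} (hl : IsPath R l) : l ≠ [] := hl.1

theorem IsPath.nodup {l : List α} (hl : IsPath R l) : l.Nodup := hl.2.1

theorem IsPath.isChain {l : List α} (hl : IsPath R l) : l.IsChain R := hl.2.2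

theorem IsPath.of_infix {l l' : List α} (hl : IsPath R l) (h : l' <:+: l) (hne : l' ≠ []) :
    IsPath R l' :=
  ⟨hne, hl.nodup.sublist h.sublist, hl.isChain.infix h⟩

theorem OutSemicomplete.exists_isChain_cons_perm_append (hR : OutSemicomplete R) :
    ∀ {x : α} {l₁ l₂ : List α}, (x :: l₁).IsChain R → (x :: l₂).IsChain R → l₁.Disjoint l₂ →
      ∃ r, r.Perm (l₁ ++ l₂) ∧ (x :: r).IsChain R
  | _, [], l₂, _, h₂, _ => ⟨l₂, .rfl, h₂⟩
  | _, a :: t₁, [], h₁, _, _ => ⟨a :: t₁, by simp, h₁⟩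
  | x, a :: t₁, b :: t₂, h₁, h₂, hd => by
    rw [List.isChain_cons_cons] at h₁ h₂
    have hab : a ≠ b := fun h => hd List.mem_cons_self (h ▸ List.mem_cons_self)
    rcases hR x a b h₁.1 h₂.1 hab with hab | hba
    · obtain ⟨r, hr, hc⟩ := hR.exists_isChain_cons_perm_append h₁.2
        (List.isChain_cons_cons.2 ⟨hab, h₂.2⟩) (List.disjoint_cons_left.1 hd).2
      exact ⟨a :: r, hr.cons a, List.isChain_cons_cons.2 ⟨h₁.1, hc⟩⟩
    · obtain ⟨r, hr, hc⟩ := hR.exists_isChain_cons_perm_append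
        (List.isChain_cons_cons.2 ⟨hba, h₁.2⟩) h₂.2 (List.disjoint_cons_right.1 hd).2
      exact ⟨b :: r, (hr.cons b).trans List.perm_middle.symm, List.isChain_cons_cons.2 ⟨h₂.1, hc⟩⟩
termination_by _ l₁ l₂ => l₁.length + l₂.length

theorem OutSemicomplete.exists_isPath_cons_perm_append (hR : OutSemicomplete R) {x b : α}
    {l q : List α} (hp : IsPath R (x :: l)) (hq : IsPath R q) (hd : (x :: l).Disjoint q)
    (hb : q.head? = some b) (hxb : R x b) : ∃ r, IsPath R (x :: r) ∧ r.Perm (l ++ q) := by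
  obtain ⟨q, rfl⟩ := List.head?_eq_some_iff.1 hb
  obtain ⟨r, hr, hc⟩ := hR.exists_isChain_cons_perm_append hp.isChain
    (List.isChain_cons_cons.2 ⟨hxb, hq.isChain⟩) (List.disjoint_cons_left.1 hd).2
  have hnd : (x :: (l ++ b :: q)).Nodup := hp.nodup.append hq.nodup hd
  exact ⟨r, ⟨List.cons_ne_nil _ _, (hr.cons x).nodup_iff.2 hnd, hc⟩, hr⟩

theorem OutSemicomplete.exists_isPath_perm_append (hR : OutSemicomplete R) {x b : α}
    {p q : List α} (hp : IsPath R p) (hq : IsPath R q) (hd : p.Disjoint q) (hx : x ∈ p)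
    (hb : q.head? = some b) (hxb : R x b) : ∃ m, IsPath R m ∧ m.Perm (p ++ q) := by
  obtain ⟨s, t, rfl⟩ := List.append_of_mem hx
  obtain ⟨r, hr, hperm⟩ := hR.exists_isPath_cons_perm_append
    (hp.of_infix ((List.suffix_append s (x :: t)).isInfix) (List.cons_ne_nil _ _)) hq
    (List.disjoint_append_left.1 hd).2 hb hxb
  have hm : (s ++ x :: r).Perm (s ++ x :: t ++ q) := by simpa using (hperm.cons x).append_left s
  have hchain : (s ++ [x] ++ r).IsChain R := by
    refine List.IsChain.append_overlap ?_ hr.isChain (List.cons_ne_nil _ _)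
    exact List.IsChain.left_of_append (l₂ := t) (by simpa using hp.isChain)
  have hchain' : (s ++ x :: r).IsChain R := by simpa using hchain
  exact ⟨s ++ x :: r, ⟨by simp, hm.nodup_iff.2 (hp.nodup.append hq.nodup hd), hchain'⟩, hm⟩

theorem OutSemicomplete.exists_isPath_cons_perm (hR : OutSemicomplete R) {x h : α} {l : List α}
    (ht : IsPath R (h :: l)) (hx : x ∈ l) (hxh : R x h) :
    ∃ r, IsPath R (x :: r) ∧ (x :: r).Perm (h :: l) := by
  obtain ⟨s, u, rfl⟩ := List.append_of_mem hx
  have hnd : ((h :: s) ++ x :: u).Nodup := ht.nodup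
  obtain ⟨r, hr, hperm⟩ := hR.exists_isPath_cons_perm_append
    (ht.of_infix (List.infix_cons ((List.suffix_append s (x :: u)).isInfix)) (List.cons_ne_nil _ _))
    (ht.of_infix (l' := h :: s) ⟨[], x :: u, by simp⟩ (List.cons_ne_nil _ _))
    (List.disjoint_of_nodup_append hnd).symm rfl hxh
  exact ⟨r, hr, (hperm.cons x).trans (List.perm_append_comm (l₁ := x :: u))⟩

end Lists

section Partitions

variable {V : Type*} {A : V → V → Prop}

structure IsPathPartitionOn (A : V → V → Prop) (W : Finset V) (P : Finset (List V)) : Prop where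
  isPath : ∀ p ∈ P, IsPath A p
  disjoint : PDisjoint P
  subset : ∀ p ∈ P, ∀ x ∈ p, x ∈ W
  cover : ∀ v ∈ W, ∃ p ∈ P, v ∈ p

structure IsKOptimalOn (A : V → V → Prop) (k : ℕ) (W : Finset V) (P : Finset (List V)) : Prop
    extends IsPathPartitionOn A W P where
  knorm_le : ∀ Q, IsPathPartitionOn A W Q → knorm k P ≤ knorm k Q

variable {W : Finset V} {P : Finset (List V)} {k : ℕ}

theorem IsPathPartitionOn.eq_of_mem (hP : IsPathPartitionOn A W P) {p q : List V} (hp : p ∈ P)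
    (hq : q ∈ P) {x : V} (hxp : x ∈ p) (hxq : x ∈ q) : p = q :=
  by_contra fun h => hP.disjoint p hp q hq h x hxp hxq

theorem KOptimal.isKOptimalOn_univ [Fintype V]
    (hP : KOptimal A k P) : IsKOptimalOn A k Finset.univ P where
  isPath := hP.1.1
  disjoint := hP.1.2.1
  subset _ _ x _ := Finset.mem_univ x
  cover v _ := hP.1.2.2 v
  knorm_le Q hQ := hP.2 Q ⟨hQ.isPath, hQ.disjoint, fun v => hQ.cover v (Finset.mem_univ v)⟩

theorem knorm_singleton (k : ℕ) (p : List V) : knorm k {p} = min p.length k :=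
  Finset.sum_singleton _ _

theorem knorm_succ (k : ℕ) (P : Finset (List V)) :
    knorm (k + 1) P = knorm k P + (P.filter fun p => k < p.length).card := by
  rw [knorm, knorm, Finset.card_filter, ← Finset.sum_add_distrib]
  refine Finset.sum_congr rfl fun p _ => ?_
  split_ifs <;> omega

variable [DecidableEq V]

theorem knorm_pair {p q : List V} (hpq : p ≠ q) :
    knorm k {p, q} = min p.length k + min q.length k :=
  Finset.sum_pair hpq

theorem isPathPartitionOn_image_singleton (S : Finset V) :
    IsPathPartitionOn A S (S.image fun v => [v]) where
  isPath := by
    simp only [Finset.mem_image, forall_exists_index, and_imp]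
    rintro _ v - rfl
    exact ⟨List.cons_ne_nil _ _, List.nodup_singleton v, List.isChain_singleton v⟩
  disjoint := by
    simp only [PDisjoint, Finset.mem_image]
    rintro _ ⟨v, -, rfl⟩ _ ⟨w, -, rfl⟩ hvw x hxv hxw
    rw [List.mem_singleton] at hxv hxw
    exact hvw (by rw [← hxv, ← hxw])
  subset := by
    simp only [Finset.mem_image]
    rintro _ ⟨v, hv, rfl⟩ x hx
    rwa [List.mem_singleton.1 hx]
  cover v hv := ⟨[v], Finset.mem_image_of_mem _ hv, List.mem_singleton_self v⟩

theorem knorm_image_singleton (S : Finset V) : knorm (k + 1) (S.image fun v => [v]) = S.card := by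
  rw [knorm, Finset.sum_image fun _ _ _ _ h => List.singleton_injective h]
  simp

theorem exists_isKOptimalOn (A : V → V → Prop) (k : ℕ) (W : Finset V) :
    ∃ P, IsKOptimalOn A k W P := by
  obtain ⟨P, hP, hmin⟩ := (measure (knorm k)).wf.has_min {P | IsPathPartitionOn A W P}
    ⟨_, isPathPartitionOn_image_singleton W⟩
  exact ⟨P, hP, fun Q hQ => not_lt.1 (hmin Q hQ)⟩

theorem IsPathPartitionOn.union {W' : Finset V} {Q : Finset (List V)}
    (hP : IsPathPartitionOn A W P) (hQ : IsPathPartitionOn A W' Q) (hW : Disjoint W W') :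
    IsPathPartitionOn A (W ∪ W') (P ∪ Q) ∧ Disjoint P Q := by
  have hPQ : ∀ p ∈ P, ∀ q ∈ Q, ∀ x ∈ p, x ∉ q := fun p hp q hq x hxp hxq =>
    Finset.disjoint_left.1 hW (hP.subset p hp x hxp) (hQ.subset q hq x hxq)
  refine ⟨⟨?_, ?_, ?_, ?_⟩, Finset.disjoint_left.2 fun p hp hq => ?_⟩
  · simp only [Finset.mem_union]
    rintro p (hp | hp)
    exacts [hP.isPath p hp, hQ.isPath p hp]
  · simp only [PDisjoint, Finset.mem_union]
    rintro p (hp | hp) q (hq | hq) hpq x hxp hxq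
    exacts [hP.disjoint p hp q hq hpq x hxp hxq, hPQ p hp q hq x hxp hxq,
      hPQ q hq p hp x hxq hxp, hQ.disjoint p hp q hq hpq x hxp hxq]
  · simp only [Finset.mem_union]
    rintro p (hp | hp) x hx
    exacts [Or.inl (hP.subset p hp x hx), Or.inr (hQ.subset p hp x hx)]
  · simp only [Finset.mem_union]
    rintro v (hv | hv)
    · obtain ⟨p, hp, hvp⟩ := hP.cover v hv
      exact ⟨p, Or.inl hp, hvp⟩
    · obtain ⟨p, hp, hvp⟩ := hQ.cover v hv
      exact ⟨p, Or.inr hp, hvp⟩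
  · obtain ⟨x, hx⟩ := List.exists_mem_of_ne_nil p (hP.isPath p hp).ne_nil
    exact hPQ p hp p hq x hx hx

theorem IsPathPartitionOn.exchange (hP : IsPathPartitionOn A W P) {R N : Finset (List V)}
    (hR : R ⊆ P) (hN : ∀ n ∈ N, IsPath A n) (hNd : PDisjoint N)
    (hNR : ∀ x, (∃ n ∈ N, x ∈ n) ↔ ∃ r ∈ R, x ∈ r) :
    IsPathPartitionOn A W (P \ R ∪ N) ∧
      knorm k (P \ R ∪ N) + knorm k R = knorm k P + knorm k N := by
  have hfar : ∀ p ∈ P \ R, ∀ n ∈ N, ∀ x ∈ n, x ∉ p := by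
    intro p hp n hn x hxn hxp
    obtain ⟨r, hr, hxr⟩ := (hNR x).1 ⟨n, hn, hxn⟩
    rw [Finset.mem_sdiff] at hp
    exact hP.disjoint p hp.1 r (hR hr) (fun h => hp.2 (h ▸ hr)) x hxp hxr
  have hdisj : Disjoint (P \ R) N := Finset.disjoint_left.2 fun p hp hpN => by
    obtain ⟨x, hx⟩ := List.exists_mem_of_ne_nil p (hN p hpN).ne_nil
    exact hfar p hp p hpN x hx hx
  refine ⟨⟨?_, ?_, ?_, ?_⟩, ?_⟩
  · simp only [Finset.mem_union, Finset.mem_sdiff]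
    rintro p (hp | hp)
    exacts [hP.isPath p hp.1, hN p hp]
  · simp only [PDisjoint, Finset.mem_union]
    rintro p (hp | hp) q (hq | hq) hpq x hxp hxq
    exacts [hP.disjoint p (Finset.mem_sdiff.1 hp).1 q (Finset.mem_sdiff.1 hq).1 hpq x hxp hxq,
      hfar p hp q hq x hxq hxp, hfar q hq p hp x hxp hxq, hNd p hp q hq hpq x hxp hxq]
  · simp only [Finset.mem_union]
    rintro p (hp | hp) x hx
    · exact hP.subset p (Finset.mem_sdiff.1 hp).1 x hx
    · obtain ⟨r, hr, hxr⟩ := (hNR x).1 ⟨p, hp, hx⟩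
      exact hP.subset r (hR hr) x hxr
  · intro v hv
    obtain ⟨p, hp, hvp⟩ := hP.cover v hv
    by_cases hpR : p ∈ R
    · obtain ⟨n, hn, hvn⟩ := (hNR v).2 ⟨p, hpR, hvp⟩
      exact ⟨n, Finset.mem_union_right _ hn, hvn⟩
    · exact ⟨p, Finset.mem_union_left _ (Finset.mem_sdiff.2 ⟨hp, hpR⟩), hvp⟩
  · rw [knorm, knorm, knorm, knorm, Finset.sum_union hdisj, add_right_comm, Finset.sum_sdiff hR]

def heads (P : Finset (List V)) : Finset V := P.biUnion fun p => p.head?.toFinset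

def tails (P : Finset (List V)) : Finset (List V) :=
  (P.filter fun p => p.tail ≠ []).image List.tail

theorem mem_heads {v : V} : v ∈ heads P ↔ ∃ p ∈ P, p.head? = some v := by
  simp [heads]

theorem IsPathPartitionOn.mem_heads_iff (hP : IsPathPartitionOn A W P) {p : List V} (hp : p ∈ P)
    {v : V} (hv : v ∈ p) : v ∈ heads P ↔ p.head? = some v := by
  refine ⟨fun h => ?_, fun h => mem_heads.2 ⟨p, hp, h⟩⟩
  obtain ⟨q, hq, hqv⟩ := mem_heads.1 h
  rwa [hP.eq_of_mem hp hq hv (List.mem_of_head? hqv)]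

theorem IsPathPartitionOn.card_heads (hP : IsPathPartitionOn A W P) : (heads P).card = P.card := by
  rw [heads, Finset.card_biUnion, Finset.card_eq_sum_ones]
  · refine Finset.sum_congr rfl fun p hp => ?_
    obtain ⟨a, t, rfl⟩ := List.exists_cons_of_ne_nil (hP.isPath p hp).ne_nil
    simp
  · intro p hp q hq hpq
    simp only [Function.onFun, Finset.disjoint_left, Option.mem_toFinset, Option.mem_def]
    intro v hpv hqv
    exact hpq (hP.eq_of_mem hp hq (List.mem_of_head? hpv) (List.mem_of_head? hqv))

theorem IsPathPartitionOn.tails_sdiff_heads (hP : IsPathPartitionOn A W P) :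
    IsPathPartitionOn A (W \ heads P) (tails P) := by
  have hmem : ∀ t ∈ tails P, ∃ p ∈ P, p.tail = t ∧ t ≠ [] := by
    simp only [tails, Finset.mem_image, Finset.mem_filter]
    rintro t ⟨p, ⟨hp, hne⟩, rfl⟩
    exact ⟨p, hp, rfl, hne⟩
  have hnothead : ∀ p ∈ P, ∀ x ∈ p.tail, x ∉ heads P := by
    intro p hp x hx
    obtain ⟨a, t, rfl⟩ := List.exists_cons_of_ne_nil (hP.isPath p hp).ne_nil
    rw [hP.mem_heads_iff hp (List.mem_cons_of_mem a hx)]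
    rintro ⟨⟩
    exact (List.nodup_cons.1 (hP.isPath _ hp).nodup).1 hx
  refine ⟨?_, ?_, ?_, ?_⟩
  · rintro _ ht
    obtain ⟨p, hp, rfl, hne⟩ := hmem _ ht
    exact (hP.isPath p hp).of_infix (List.tail_suffix p).isInfix hne
  · rintro _ ht _ hs hts x hxt hxs
    obtain ⟨p, hp, rfl, -⟩ := hmem _ ht
    obtain ⟨q, hq, rfl, -⟩ := hmem _ hs
    exact hts (congrArg List.tail
      (hP.eq_of_mem hp hq (List.mem_of_mem_tail hxt) (List.mem_of_mem_tail hxs)))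
  · rintro _ ht x hx
    obtain ⟨p, hp, rfl, -⟩ := hmem _ ht
    exact Finset.mem_sdiff.2 ⟨hP.subset p hp x (List.mem_of_mem_tail hx), hnothead p hp x hx⟩
  · intro v hv
    rw [Finset.mem_sdiff] at hv
    obtain ⟨p, hp, hvp⟩ := hP.cover v hv.1
    obtain ⟨a, t, rfl⟩ := List.exists_cons_of_ne_nil (hP.isPath p hp).ne_nil
    have hvt : v ∈ t := by
      rcases List.mem_cons.1 hvp with rfl | hvt
      · exact absurd (mem_heads.2 ⟨_, hp, rfl⟩) hv.2
      · exact hvt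
    exact ⟨t, Finset.mem_image.2 ⟨a :: t, Finset.mem_filter.2 ⟨hp, List.ne_nil_of_mem hvt⟩, rfl⟩,
      hvt⟩

theorem IsPathPartitionOn.knorm_tails_add_card (hP : IsPathPartitionOn A W P) :
    knorm k (tails P) + P.card = knorm (k + 1) P := by
  have hinj : Set.InjOn List.tail ((P.filter fun p => p.tail ≠ []) : Set (List V)) := by
    intro p hp q hq hpq
    simp only [Finset.coe_filter, Set.mem_ofPred_eq] at hp hq
    obtain ⟨x, hx⟩ := List.exists_mem_of_ne_nil _ hp.2
    exact hP.eq_of_mem hp.1 hq.1 (List.mem_of_mem_tail hx) (List.mem_of_mem_tail (hpq ▸ hx))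
  rw [knorm, tails, Finset.sum_image hinj, Finset.sum_filter_of_ne, knorm,
    Finset.card_eq_sum_ones, ← Finset.sum_add_distrib]
  · refine Finset.sum_congr rfl fun p hp => ?_
    obtain ⟨a, t, rfl⟩ := List.exists_cons_of_ne_nil (hP.isPath p hp).ne_nil
    simp only [List.length_cons, List.tail_cons]
    omega
  · intro p _ hp h
    simp [h] at hp

theorem IsPathPartitionOn.add_singletons {S : Finset V} (hP : IsPathPartitionOn A (W \ S) P)
    (hS : S ⊆ W) :
    IsPathPartitionOn A W (P ∪ S.image fun v => [v]) ∧
      knorm (k + 1) (P ∪ S.image fun v => [v]) = knorm (k + 1) P + S.card := by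
  obtain ⟨hpart, hdisj⟩ := hP.union (isPathPartitionOn_image_singleton S) Finset.sdiff_disjoint
  rw [Finset.sdiff_union_of_subset hS] at hpart
  refine ⟨hpart, ?_⟩
  rw [← knorm_image_singleton (k := k) S]
  exact Finset.sum_union hdisj

theorem IsKOptimalOn.merge (hout : OutSemicomplete A) (hk : 0 < k) (hopt : IsKOptimalOn A k W P)
    {p q : List V} (hp : p ∈ P) (hq : q ∈ P) (hpq : p ≠ q) {x b : V} (hx : x ∈ p)
    (hb : q.head? = some b) (hxb : A x b) :
    p.length + q.length ≤ k ∧ ∃ m, m.Perm (p ++ q) ∧ IsKOptimalOn A k W (P \ {p, q} ∪ {m}) := by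
  obtain ⟨m, hm, hperm⟩ := hout.exists_isPath_perm_append (hopt.isPath p hp) (hopt.isPath q hq)
    (fun y hyp hyq => hopt.disjoint p hp q hq hpq y hyp hyq) hx hb hxb
  obtain ⟨hpart, hnorm⟩ := hopt.exchange (k := k) (R := {p, q}) (N := {m})
    (Finset.insert_subset hp (Finset.singleton_subset_iff.2 hq)) (by simpa using hm)
    (by simp [PDisjoint]) (fun y => by simp [hperm.mem_iff, or_and_right, exists_or])
  rw [knorm_pair hpq, knorm_singleton, hperm.length_eq, List.length_append] at hnorm
  have hle := hopt.knorm_le _ hpart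
  have hp0 := List.length_pos_iff.2 (hopt.isPath p hp).ne_nil
  have hq0 := List.length_pos_iff.2 (hopt.isPath q hq).ne_nil
  exact ⟨by omega, m, hperm, hpart, fun Q hQ => by have := hopt.knorm_le Q hQ; omega⟩

theorem IsKOptimalOn.replace_perm (hopt : IsKOptimalOn A k W P) {t t' : List V} (ht : t ∈ P)
    (ht' : IsPath A t') (hperm : t'.Perm t) : IsKOptimalOn A k W (P \ {t} ∪ {t'}) := by
  obtain ⟨hpart, hnorm⟩ := hopt.exchange (k := k) (R := {t}) (N := {t'})
    (Finset.singleton_subset_iff.2 ht) (by simpa using ht') (by simp [PDisjoint])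
    (fun y => by simp [hperm.mem_iff])
  rw [knorm_singleton, knorm_singleton, hperm.length_eq] at hnorm
  exact ⟨hpart, fun Q hQ => by have := hopt.knorm_le Q hQ; omega⟩

theorem IsKOptimalOn.exists_rerouting (hout : OutSemicomplete A) (hk : 0 < k)
    {P₀ Q : Finset (List V)} (hP₀ : IsPathPartitionOn A W P₀)
    (hQ : IsKOptimalOn A k (W \ heads P₀) Q) {h : V} {t : List V} (ht : h :: t ∈ Q)
    (hlen : k < (h :: t).length) {a b : List V} (hp : a ++ h :: b ∈ P₀) :
    ∃ s h' b' t', s :: h' :: b' ∈ P₀ ∧ IsPath A (h' :: t') ∧ (h' :: t').Perm (h :: t) := by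
  induction hn : a.length using Nat.strong_induction_on generalizing Q h t a b with
  | _ n ih =>
  have hhS : h ∉ heads P₀ := (Finset.mem_sdiff.1 (hQ.subset _ ht h List.mem_cons_self)).2
  rcases List.eq_nil_or_concat a with rfl | ⟨a, x, rfl⟩
  · exact absurd (mem_heads.2 ⟨_, hp, rfl⟩) hhS
  have hp' : a ++ x :: h :: b ∈ P₀ := by simpa using hp
  have hnd := (hP₀.isPath _ hp').nodup
  have hxne : x ≠ h := fun hxh =>
    (List.nodup_cons.1 hnd.of_append_right).1 (by simp [hxh])
  have hxh : A x h := List.isChain_pair.1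
    ((hP₀.isPath _ hp').isChain.infix ⟨a, b, by simp⟩)
  rcases List.eq_nil_or_concat a with rfl | ⟨c, y, rfl⟩
  · exact ⟨x, h, b, t, hp', hQ.isPath _ ht, .rfl⟩
  have hxS : x ∉ heads P₀ := by
    rw [hP₀.mem_heads_iff hp' (by simp), List.head?_append_of_ne_nil _ (by simp)]
    exact fun hhead => List.disjoint_of_nodup_append hnd (List.mem_of_head? hhead)
      List.mem_cons_self
  have hxW : x ∈ W \ heads P₀ :=
    Finset.mem_sdiff.2 ⟨hP₀.subset _ hp' x (by simp), hxS⟩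
  obtain ⟨q, hq, hxq⟩ := hQ.cover x hxW
  by_cases hqt : q = h :: t
  · subst hqt
    obtain ⟨r, hr, hperm⟩ := hout.exists_isPath_cons_perm (hQ.isPath _ hq)
      ((List.mem_cons.1 hxq).resolve_left hxne) hxh
    obtain ⟨s, h', b', t', hs, ht', hperm'⟩ := ih (c.concat y).length (by simp [← hn])
      (hQ.replace_perm hq hr hperm)
      (Finset.mem_union_right _ (Finset.mem_singleton_self _)) (hperm.length_eq ▸ hlen) hp' rfl
    exact ⟨s, h', b', t', hs, ht', hperm'.trans hperm⟩
  · have := (hQ.merge hout hk hq ht hqt hxq rfl hxh).1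
    simp only [List.length_cons] at this hlen
    omega

theorem IsKOptimalOn.exists_extension_by_head (hout : OutSemicomplete A) (hk : 0 < k)
    {P₀ Q : Finset (List V)} (hP₀ : IsPathPartitionOn A W P₀)
    (hQ : IsKOptimalOn A k (W \ heads P₀) Q) {t : List V} (ht : t ∈ Q) (hlen : k < t.length) :
    ∃ s h b m, s :: h :: b ∈ P₀ ∧ h ∈ t ∧ IsPath A m ∧ m.Perm (s :: t) := by
  obtain ⟨h, t, rfl⟩ := List.exists_cons_of_ne_nil (hQ.isPath _ ht).ne_nil
  have hhW := Finset.mem_sdiff.1 (hQ.subset _ ht h List.mem_cons_self)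
  obtain ⟨p, hp, hhp⟩ := hP₀.cover h hhW.1
  obtain ⟨a, b, rfl⟩ := List.append_of_mem hhp
  obtain ⟨s, h', b', t', hs, ht', hperm⟩ := hQ.exists_rerouting hout hk hP₀ ht hlen hp
  have hsS : s ∈ heads P₀ := mem_heads.2 ⟨_, hs, rfl⟩
  have hst : s ∉ h' :: t' := fun hst =>
    (Finset.mem_sdiff.1 (hQ.subset _ ht s (hperm.mem_iff.1 hst))).2 hsS
  have hsh : A s h' := List.isChain_cons_cons.1 (hP₀.isPath _ hs).isChain |>.1
  exact ⟨s, h', b', s :: h' :: t', hs, hperm.mem_iff.1 List.mem_cons_self,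
    ⟨List.cons_ne_nil _ _, List.nodup_cons.2 ⟨hst, ht'.nodup⟩,
      List.isChain_cons_cons.2 ⟨hsh, ht'.isChain⟩⟩, hperm.cons s⟩

theorem IsPathPartitionOn.exists_absorb {R F : Finset (List V)} (hR : IsPathPartitionOn A W R)
    (hFR : F ⊆ R) (ν μ : List V → List V)
    (hF : ∀ q ∈ F, k < q.length ∧ ν q ∈ R ∧ ν q ∉ F ∧ (ν q).length = 1 ∧ IsPath A (μ q) ∧
      (μ q).Perm (ν q ++ q))
    (hν : Set.InjOn ν F) :
    ∃ R', IsPathPartitionOn A W R' ∧ knorm (k + 1) R' + F.card = knorm (k + 1) R := by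
  induction F using Finset.induction_on generalizing R with
  | empty => exact ⟨R, hR, by simp⟩
  | insert q F hqF ih =>
    obtain ⟨hlen, hνR, hνF, hν1, hμ, hperm⟩ := hF q (Finset.mem_insert_self q F)
    have hνq : ν q ≠ q := (ne_of_mem_of_not_mem (Finset.mem_insert_self q F) hνF).symm
    obtain ⟨hpart, hnorm⟩ := hR.exchange (k := k + 1) (R := {ν q, q}) (N := {μ q})
      (Finset.insert_subset hνR (Finset.singleton_subset_iff.2 (hFR (Finset.mem_insert_self q F))))
      (by simpa using hμ) (by simp [PDisjoint]) (fun y => by simp [hperm.mem_iff])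
    rw [knorm_pair hνq, knorm_singleton, hperm.length_eq, List.length_append, hν1] at hnorm
    have hkeep : ∀ r ∈ R, r ≠ ν q → r ≠ q → r ∈ R \ {ν q, q} ∪ {μ q} :=
      fun r hr h₁ h₂ => by simp [hr, h₁, h₂]
    have hFR' : F ⊆ R \ {ν q, q} ∪ {μ q} := fun q' hq' =>
      hkeep q' (hFR (Finset.mem_insert_of_mem hq'))
        (ne_of_mem_of_not_mem (Finset.mem_insert_of_mem hq') hνF) (ne_of_mem_of_not_mem hq' hqF)
    have hF' : ∀ q' ∈ F, k < q'.length ∧ ν q' ∈ R \ {ν q, q} ∪ {μ q} ∧ ν q' ∉ F ∧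
        (ν q').length = 1 ∧ IsPath A (μ q') ∧ (μ q').Perm (ν q' ++ q') := by
      intro q' hq'
      obtain ⟨hlen', hνR', hνF', hν1', hμ', hperm'⟩ := hF q' (Finset.mem_insert_of_mem hq')
      have hνν : ν q' ≠ ν q := fun h => ne_of_mem_of_not_mem hq' hqF
        (hν (Finset.mem_insert_of_mem hq') (Finset.mem_insert_self q F) h)
      exact ⟨hlen', hkeep _ hνR' hνν (ne_of_mem_of_not_mem (Finset.mem_insert_self q F) hνF').symm,
        fun h => hνF' (Finset.mem_insert_of_mem h), hν1', hμ', hperm'⟩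
    obtain ⟨R', hR', hnorm'⟩ := ih hpart hFR' hF' (hν.mono (Finset.subset_insert q F))
    refine ⟨R', hR', ?_⟩
    rw [Finset.card_insert_of_notMem hqF]
    omega

theorem IsPathPartitionOn.heads_subset (hP : IsPathPartitionOn A W P) : heads P ⊆ W := by
  intro v hv
  obtain ⟨p, hp, hpv⟩ := mem_heads.1 hv
  exact hP.subset p hp v (List.mem_of_head? hpv)

theorem IsKOptimalOn.exists_isPathPartitionOn_knorm_succ (hout : OutSemicomplete A) (hk : 0 < k)
    {Q : Finset (List V)} (hP : IsPathPartitionOn A W P) (hQ : IsKOptimalOn A k (W \ heads P) Q) :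
    ∃ R, IsPathPartitionOn A W R ∧ knorm (k + 1) R = knorm k Q + P.card := by
  set F := Q.filter fun q => k < q.length
  have hext : ∀ q ∈ F, ∃ ν m : List V, (∃ s h b, ν = [s] ∧ s :: h :: b ∈ P ∧ h ∈ q) ∧
      IsPath A m ∧ m.Perm (ν ++ q) := by
    intro q hq
    obtain ⟨s, h, b, m, hp, hhq, hm, hperm⟩ := hQ.exists_extension_by_head hout hk hP
      (Finset.mem_filter.1 hq).1 (Finset.mem_filter.1 hq).2
    exact ⟨[s], m, ⟨s, h, b, rfl, hp, hhq⟩, hm, hperm⟩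
  choose! ν μ hν hμ hperm using hext
  have hνS : ∀ q ∈ F, ∃ s ∈ heads P, ν q = [s] := fun q hq => by
    obtain ⟨s, h, b, hs, hp, -⟩ := hν q hq
    exact ⟨s, mem_heads.2 ⟨_, hp, rfl⟩, hs⟩
  have hνinj : Set.InjOn ν F := by
    intro q₁ hq₁ q₂ hq₂ hνq
    obtain ⟨s₁, h₁, b₁, hs₁, hp₁, hhq₁⟩ := hν q₁ hq₁
    obtain ⟨s₂, h₂, b₂, hs₂, hp₂, hhq₂⟩ := hν q₂ hq₂
    obtain rfl : s₁ = s₂ := List.singleton_injective (hs₁.symm.trans (hνq.trans hs₂))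
    have hp := hP.eq_of_mem hp₁ hp₂ List.mem_cons_self List.mem_cons_self
    simp only [List.cons.injEq, true_and] at hp
    exact hQ.eq_of_mem (Finset.mem_filter.1 hq₁).1 (Finset.mem_filter.1 hq₂).1 hhq₁
      (hp.1 ▸ hhq₂)
  obtain ⟨hR₀, hnorm₀⟩ := hQ.add_singletons (k := k) hP.heads_subset
  obtain ⟨R, hR, hnorm⟩ := hR₀.exists_absorb
    ((Finset.filter_subset _ _).trans Finset.subset_union_left) ν μ (fun q hq => by
      obtain ⟨s, hs, hνs⟩ := hνS q hq
      refine ⟨(Finset.mem_filter.1 hq).2, ?_, fun hF => ?_, by simp [hνs], hμ q hq, hperm q hq⟩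
      · exact Finset.mem_union_right _ (hνs ▸ Finset.mem_image_of_mem _ hs)
      · have := hQ.subset _ (Finset.mem_filter.1 hF).1 s (by simp [hνs])
        exact (Finset.mem_sdiff.1 this).2 hs) hνinj
  have := knorm_succ k Q
  have := hP.card_heads
  exact ⟨R, hR, by omega⟩

theorem IsKOptimalOn.tails_sdiff_heads (hout : OutSemicomplete A)
    (hopt : IsKOptimalOn A (k + 1) W P) : IsKOptimalOn A k (W \ heads P) (tails P) := by
  refine ⟨hopt.toIsPathPartitionOn.tails_sdiff_heads, fun Q hQ => ?_⟩
  rcases Nat.eq_zero_or_pos k with rfl | hk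
  · simp [knorm]
  obtain ⟨Qo, hQo⟩ := exists_isKOptimalOn A k (W \ heads P)
  obtain ⟨R, hR, hnorm⟩ := hQo.exists_isPathPartitionOn_knorm_succ hout hk hopt.toIsPathPartitionOn
  have := hopt.knorm_le R hR
  have := hopt.knorm_tails_add_card (k := k)
  have := hQo.knorm_le Q hQ
  omega

end Partitions

section Colorings

variable {V : Type*} {A : V → V → Prop} {k : ℕ}

theorem IsPartialKColoring.cons {C : Fin k → Finset V} {S : Finset V}
    (hC : IsPartialKColoring A k C) (hS : DStable A (S : Set V)) (hSC : ∀ i, Disjoint S (C i)) :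
    IsPartialKColoring A (k + 1) (Fin.cons S C) := by
  refine ⟨Fin.cases hS hC.1, Fin.cases (Fin.cases (fun h => absurd rfl h) fun j _ => hSC j)
    fun i => Fin.cases (fun _ => (hSC i).symm) fun j hij => hC.2 i j ?_⟩
  exact fun h => hij (h ▸ rfl)

variable [DecidableEq V]

def metColors (C : Fin k → Finset V) (l : List V) : Finset (Fin k) :=
  Finset.univ.filter fun i => ∃ x ∈ l, x ∈ C i

theorem card_metColors_le_length {C : Fin k → Finset V}
    (hC : ∀ i j, i ≠ j → Disjoint (C i) (C j)) (l : List V) :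
    (metColors C l).card ≤ l.length :=
  calc (metColors C l).card ≤ l.toFinset.card := by
        refine Finset.card_le_card_of_forall_subsingleton (fun i x => x ∈ C i) ?_ ?_
        · simp [metColors]
        · intro x _ i hi j hj
          by_contra hij
          exact Finset.disjoint_left.1 (hC i j hij) hi.2 hj.2
    _ ≤ l.length := List.toFinset_card_le l

theorem metColors_of_perm_append (C : Fin k → Finset V) {m p q : List V} (h : m.Perm (p ++ q)) :
    metColors C m = metColors C p ∪ metColors C q := by
  ext i
  simp [metColors, h.mem_iff, or_and_right, exists_or]

theorem length_le_card_metColors_of_perm_append {C : Fin k → Finset V}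
    (hC : ∀ i j, i ≠ j → Disjoint (C i) (C j)) {m p q : List V} (hm : m.Perm (p ++ q))
    (h : p.length + q.length ≤ (metColors C m).card) : p.length ≤ (metColors C p).card := by
  have := Finset.card_union_le (metColors C p) (metColors C q)
  rw [← metColors_of_perm_append C hm] at this
  have := card_metColors_le_length hC q
  omega

theorem OrthoPC.of_merge {C : Fin k → Finset V} {P : Finset (List V)} {p q m : List V}
    (hC : ∀ i j, i ≠ j → Disjoint (C i) (C j)) (hortho : OrthoPC k C (P \ {p, q} ∪ {m}))
    (hm : m.Perm (p ++ q)) (hlen : p.length + q.length ≤ k) : OrthoPC k C P := by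
  intro r hr
  have hmk : p.length + q.length ≤ (metColors C m).card := by
    have := hortho m (by simp)
    rw [hm.length_eq, List.length_append, min_eq_left hlen] at this
    exact this
  by_cases hrp : r = p
  · subst hrp
    exact (min_le_left _ _).trans (length_le_card_metColors_of_perm_append hC hm hmk)
  by_cases hrq : r = q
  · subst hrq
    exact (min_le_left _ _).trans (length_le_card_metColors_of_perm_append hC
      (hm.trans List.perm_append_comm) (by omega))
  exact hortho r (by simp [hr, hrp, hrq])

theorem OrthoPC.cons_heads {C : Fin k → Finset V} {W : Finset V} {P : Finset (List V)}
    (hP : IsPathPartitionOn A W P) (hortho : OrthoPC k C (tails P)) :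
    OrthoPC (k + 1) (Fin.cons (heads P) C) P := by
  intro p hp
  obtain ⟨a, t, rfl⟩ := List.exists_cons_of_ne_nil (hP.isPath _ hp).ne_nil
  have ha : a ∈ heads P := mem_heads.2 ⟨_, hp, rfl⟩
  rw [Fin.card_filter_univ_succ', if_pos ⟨a, List.mem_cons_self, ha⟩]
  simp only [Fin.cons_succ]
  have hmono : (metColors C t).card ≤ (Finset.univ.filter fun i => ∃ x ∈ a :: t, x ∈ C i).card :=
    Finset.card_le_card fun i => by
      simp only [metColors, Finset.mem_filter, Finset.mem_univ, true_and]
      exact fun ⟨x, hx, hxi⟩ => ⟨x, List.mem_cons_of_mem a hx, hxi⟩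
  rcases eq_or_ne t [] with rfl | ht
  · simp
  · have := hortho t (Finset.mem_image.2 ⟨a :: t, Finset.mem_filter.2 ⟨hp, ht⟩, rfl⟩)
    simp only [List.length_cons]
    change _ ≤ (metColors C t).card at this
    omega

end Colorings

section Main

variable {V : Type*} [DecidableEq V] {A : V → V → Prop}

theorem card_sdiff_pair_union_singleton_lt {P : Finset (List V)} {p q : List V} (hp : p ∈ P)
    (hq : q ∈ P) (hpq : p ≠ q) (m : List V) : (P \ {p, q} ∪ {m}).card < P.card := by
  have hsub : {p, q} ⊆ P := Finset.insert_subset hp (Finset.singleton_subset_iff.2 hq)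
  have := Finset.card_le_card hsub
  have := Finset.card_union_le (P \ {p, q}) {m}
  rw [Finset.card_sdiff_of_subset hsub, Finset.card_pair hpq, Finset.card_singleton] at *
  omega

theorem IsKOptimalOn.exists_orthogonal (hout : OutSemicomplete A) :
    ∀ (k : ℕ) {W : Finset V} {P : Finset (List V)}, IsKOptimalOn A k W P →
      ∃ C : Fin k → Finset V, IsPartialKColoring A k C ∧ (∀ i, C i ⊆ W) ∧ OrthoPC k C P
  | 0, _, _, _ =>
    ⟨Fin.elim0, ⟨fun i => i.elim0, fun i => i.elim0⟩, fun i => i.elim0, fun _ _ => by simp⟩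
  | k + 1, W, P, hopt => by
    induction hn : P.card using Nat.strong_induction_on generalizing P with
    | _ n ih =>
    by_cases hS : DStable A (heads P : Set V)
    · obtain ⟨C, hC, hCW, hortho⟩ := exists_orthogonal hout k (hopt.tails_sdiff_heads hout)
      refine ⟨Fin.cons (heads P) C, hC.cons hS fun i => ?_,
        Fin.cases hopt.heads_subset fun i => (hCW i).trans Finset.sdiff_subset,
        hortho.cons_heads hopt.toIsPathPartitionOn⟩
      exact Finset.disjoint_right.2 fun x hx => (Finset.mem_sdiff.1 (hCW i hx)).2
    have hmerge : ∀ a ∈ heads P, ∀ b ∈ heads P, a ≠ b → A a b →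
        ∃ C : Fin (k + 1) → Finset V, IsPartialKColoring A (k + 1) C ∧ (∀ i, C i ⊆ W) ∧
          OrthoPC (k + 1) C P := by
      intro a ha b hb hab hab'
      obtain ⟨p, hp, hpa⟩ := mem_heads.1 ha
      obtain ⟨q, hq, hqb⟩ := mem_heads.1 hb
      have hpq : p ≠ q := by
        rintro rfl
        exact hab (Option.some_injective _ (hpa.symm.trans hqb))
      obtain ⟨hlen, m, hm, hopt'⟩ :=
        hopt.merge hout k.succ_pos hp hq hpq (List.mem_of_head? hpa) hqb hab'
      obtain ⟨C, hC, hCW, hortho⟩ :=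
        ih _ (hn ▸ card_sdiff_pair_union_singleton_lt hp hq hpq m) _ hopt' rfl
      exact ⟨C, hC, hCW, hortho.of_merge hC.2 hm hlen⟩
    simp only [DStable, DAdj, not_forall, not_not] at hS
    obtain ⟨a, ha, b, hb, hab, hadj⟩ := hS
    rcases hadj with h | h
    exacts [hmerge a ha b hb hab h, hmerge b hb a ha (Ne.symm hab) h]

end Main

theorem stmt5_general (A : V → V → Prop) (hout : OutSemicomplete A)
    (k : ℕ) (P : Finset (List V)) (hP : KOptimal A k P) :
    ∃ C : Fin k → Finset V, IsPartialKColoring A k C ∧ OrthoPC k C P := by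
  obtain ⟨C, hC, -, hortho⟩ := hP.isKOptimalOn_univ.exists_orthogonal hout k
  exact ⟨C, hC, hortho⟩

/-- Berge's Conjecture for out-semicomplete digraphs. -/
theorem stmt5 (A : V → V → Prop) (hirr : Irreflexive A) (hout : OutSemicomplete A)
    (k : ℕ) (hk : 0 < k) (P : Finset (List V)) (hP : KOptimal A k P) :
    ∃ C : Fin k → Finset V, IsPartialKColoring A k C ∧ OrthoPC k C P :=
  stmt5_general A hout k P hP

end DigraphPaper
end

section
/- Let P be a k-pack of an in-semicomplete digraph D. Then there exists a k-pack Q of D with ||Q|| = ||P||, e(Q) ⊆ e(P), and e(Q) a stable set. -/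
/-!
If the ends `u`, `v` of two distinct paths `p`, `q` of a pack are adjacent, say `u → v`, the two
paths can be merged into one path on the same vertices that still ends at `v`. Let `a` be the
first vertex of `q` dominated by `u`. If `a` starts `q`, take `p ++ q`. Otherwise the predecessor
`w` of `a` on `q` is, like `u`, an in-neighbour of `a` but not dominated by `u`, so `w → u` by
in-semicompleteness. Hence the segment of `q` up to `w` and `p` can be merged recursively into a
path ending at `u`, which then continues along `q` from `a`. A merge keeps the weight, removes a
path and creates no new end; repeat until the ends are stable.
-/

open scoped Classical

namespace DigraphPaper

variable {V : Type*} [Fintype V] [DecidableEq V]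

section

omit [Fintype V]

variable {A : V → V → Prop}

omit [DecidableEq V] in
theorem InSemicomplete.exists_isChain_perm_append (hin : InSemicomplete A) {p q : List V}
    {u v : V} (hp : p.IsChain A) (hq : q.IsChain A) (hpq : p.Disjoint q)
    (hu : p.getLast? = some u) (hv : q.getLast? = some v) (huv : A u v) :
    ∃ r : List V, r.IsChain A ∧ r.Perm (p ++ q) ∧ r.getLast? = some v := by
  induction hn : p.length + q.length using Nat.strong_induction_on
    generalizing p q u v with
  | _ n ih =>
  obtain ⟨a, hfind⟩ : ∃ a, q.find? (fun x => A u x) = some a :=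
    Option.isSome_iff_exists.1 (List.find?_isSome.2 ⟨v, List.mem_of_getLast? hv, by simpa⟩)
  obtain ⟨hua, t, s, rfl, hfirst⟩ := List.find?_eq_some_iff_append.1 hfind
  simp only [decide_eq_true_eq, Bool.not_eq_eq_eq_not, Bool.not_true,
    decide_eq_false_iff_not] at hua hfirst
  have hsv : (a :: s).getLast? = some v := by
    rwa [List.getLast?_append_of_ne_nil _ (List.cons_ne_nil _ _)] at hv
  rcases t.eq_nil_or_concat with rfl | ⟨t, w, rfl⟩
  · exact ⟨p ++ a :: s, hp.append hq (by simp [hu, hua]), List.Perm.refl _, by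
      rwa [List.getLast?_append_of_ne_nil _ (List.cons_ne_nil _ _)]⟩
  rw [List.concat_eq_append] at hq hpq hn hfirst
  obtain ⟨hpt, -⟩ := List.disjoint_append_right.1 hpq
  obtain ⟨htw, hwa, has⟩ := List.isChain_append_cons_cons.1 (List.append_assoc .. ▸ hq)
  have hwu : A w u := by
    refine (hin a u w hua hwa ?_).resolve_left (hfirst w (by simp))
    rintro rfl
    exact hpt (List.mem_of_getLast? hu) (by simp)
  obtain ⟨r, hr, hperm, hru⟩ :=
    ih _ (by subst hn; simp; omega) htw hp hpt.symm (by simp) hu hwu rfl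
  refine ⟨r ++ a :: s, hr.append has (by simp [hru, hua]), ?_, ?_⟩
  · simpa using (hperm.append_right (a :: s)).trans (List.perm_append_comm.append_right _)
  · rwa [List.getLast?_append_of_ne_nil _ (List.cons_ne_nil _ _)]

theorem pDisjoint_insert {r : List V} {R : Finset (List V)} (hr : r ∉ R) :
    PDisjoint (insert r R) ↔ PDisjoint R ∧ ∀ s ∈ R, ∀ x ∈ r, x ∉ s := by
  constructor
  · intro h
    refine ⟨fun s hs t ht ↦ h s (Finset.mem_insert_of_mem hs) t (Finset.mem_insert_of_mem ht),
      fun s hs ↦ h r (Finset.mem_insert_self r R) s (Finset.mem_insert_of_mem hs) ?_⟩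
    rintro rfl
    exact hr hs
  · rintro ⟨hR, hrR⟩ s hs t ht hst x hxs hxt
    rcases Finset.mem_insert.1 hs with rfl | hsR <;> rcases Finset.mem_insert.1 ht with rfl | htR
    · exact hst rfl
    · exact hrR t htR x hxs hxt
    · exact hrR s hsR x hxt hxs
    · exact hR s hsR t htR hst x hxs hxt

theorem IsKPack.exists_merge {k : ℕ} {P : Finset (List V)} (hP : IsKPack A k P) {p q r : List V}
    (hp : p ∈ P) (hq : q ∈ P) (hpq : p ≠ q) (hr : r.IsChain A) (hperm : r.Perm (p ++ q))
    (hlast : r.getLast? = q.getLast?) :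
    ∃ Q : Finset (List V), IsKPack A k Q ∧ weight Q = weight P ∧ pends Q ⊆ pends P ∧
      Q.card < P.card := by
  obtain ⟨R, hpR, hqR, rfl⟩ : ∃ R, p ∉ R ∧ q ∉ R ∧ P = insert p (insert q R) :=
    ⟨(P.erase p).erase q, by simp, by simp, by
      rw [Finset.insert_erase (Finset.mem_erase.2 ⟨hpq.symm, hq⟩), Finset.insert_erase hp]⟩
  obtain ⟨hcard, hpaths, hdisj⟩ := hP
  have hp_qR : p ∉ insert q R := by simp [hpq, hpR]
  rw [pDisjoint_insert hp_qR, pDisjoint_insert hqR] at hdisj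
  obtain ⟨⟨hR, hqs⟩, hps⟩ := hdisj
  have hrs : ∀ s ∈ R, ∀ x ∈ r, x ∉ s := by
    intro s hs x hx
    rcases List.mem_append.1 (hperm.mem_iff.1 hx) with hx | hx
    exacts [hps s (Finset.mem_insert_of_mem hs) x hx, hqs s hs x hx]
  obtain ⟨x, hxp⟩ := List.exists_mem_of_ne_nil p (hpaths p (by simp)).1
  have hxr : x ∈ r := hperm.mem_iff.2 (List.mem_append_left q hxp)
  have hrR : r ∉ R := fun hrR ↦ hrs r hrR x hxr hxr
  have hcardQ : (insert r R).card + 1 = (insert p (insert q R)).card := by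
    rw [Finset.card_insert_of_notMem hrR, Finset.card_insert_of_notMem hp_qR,
      Finset.card_insert_of_notMem hqR]
  refine ⟨insert r R, ⟨by omega, ?_, (pDisjoint_insert hrR).2 ⟨hR, hrs⟩⟩, ?_, ?_, by omega⟩
  · have hpq_nodup : (p ++ q).Nodup := (hpaths p (by simp)).2.1.append (hpaths q (by simp)).2.1
      fun y hyp hyq ↦ hps q (Finset.mem_insert_self q R) y hyp hyq
    intro s hs
    rcases Finset.mem_insert.1 hs with rfl | hsR
    · exact ⟨List.ne_nil_of_mem hxr, hperm.nodup_iff.2 hpq_nodup, hr⟩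
    · exact hpaths s (by simp [hsR])
  · simp only [weight, Finset.sum_insert hrR, Finset.sum_insert hp_qR, Finset.sum_insert hqR,
      hperm.length_eq, List.length_append, add_assoc]
  · rintro y ⟨s, hs, hsy⟩
    rcases Finset.mem_insert.1 hs with rfl | hsR
    · exact ⟨q, by simp, hlast ▸ hsy⟩
    · exact ⟨s, by simp [hsR], hsy⟩

theorem IsKPack.exists_card_lt_of_not_dStable (hin : InSemicomplete A) {k : ℕ}
    {P : Finset (List V)} (hP : IsKPack A k P) (hP_stable : ¬ DStable A (pends P)) :
    ∃ Q : Finset (List V), IsKPack A k Q ∧ weight Q = weight P ∧ pends Q ⊆ pends P ∧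
      Q.card < P.card := by
  simp only [DStable, not_forall, not_not] at hP_stable
  obtain ⟨u, ⟨p, hp, hpu⟩, v, ⟨q, hq, hqv⟩, huv, hadj⟩ := hP_stable
  wlog h : A u v generalizing p q u v
  · exact this v q hq hqv u p hp hpu huv.symm (Or.symm hadj) (hadj.resolve_left h)
  have hpq : p ≠ q := by
    rintro rfl
    exact huv (Option.some_inj.1 (hpu.symm.trans hqv))
  obtain ⟨r, hr, hperm, hrv⟩ := hin.exists_isChain_perm_append (hP.2.1 p hp).2.2
    (hP.2.1 q hq).2.2 (fun x ↦ hP.2.2 p hp q hq hpq x) hpu hqv h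
  exact hP.exists_merge hp hq hpq hr hperm (hrv.trans hqv.symm)

end

theorem stmt6_general (A : V → V → Prop) (hin : InSemicomplete A)
    (k : ℕ) (P : Finset (List V)) (hP : IsKPack A k P) :
    ∃ Q : Finset (List V), IsKPack A k Q ∧ weight Q = weight P ∧
      pends Q ⊆ pends P ∧ DStable A (pends Q) := by
  induction hn : P.card using Nat.strong_induction_on generalizing P with
  | _ n ih =>
  by_cases hP_stable : DStable A (pends P)
  · exact ⟨P, hP, rfl, subset_rfl, hP_stable⟩
  obtain ⟨Q, hQ, hQw, hQP, hQcard⟩ := hP.exists_card_lt_of_not_dStable hin hP_stable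
  obtain ⟨R, hR, hRw, hRQ, hR_stable⟩ := ih _ (hn ▸ hQcard) Q hQ rfl
  exact ⟨R, hR, hRw.trans hQw, hRQ.trans hQP, hR_stable⟩

/-- Any k-pack of an in-semicomplete digraph can be converted into one of the
same weight whose endpoint set is stable. -/
theorem stmt6 (A : V → V → Prop) (hirr : Irreflexive A) (hin : InSemicomplete A)
    (k : ℕ) (hk : 0 < k) (P : Finset (List V)) (hP : IsKPack A k P) :
    ∃ Q : Finset (List V), IsKPack A k Q ∧ weight Q = weight P ∧
      pends Q ⊆ pends P ∧ DStable A (pends Q) :=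
  stmt6_general A hin k P hP

end DigraphPaper
end

section
/- Let D be an in-semicomplete digraph, k a positive integer, and P a k-pack of D. Then either there exists a coloring of D orthogonal to P, or there exists a k-pack Q of D with ||Q|| = ||P|| + 1 and e(Q) ⊆ e(P) ∪ (V(D) \ V(P)). -/
open scoped Classical

/-!
We look for a local move turning `P` into a k-pack with one more vertex whose new final vertices
lie outside `V(P)`; if there is none, we build the orthogonal coloring.

The moves: add an outside vertex as a new path when `P` has fewer than `k` paths; replace a path
by a longer path of `D - V(P)`; insert an outside vertex that has an arc into `V(P)`; and, for a
path `s ++ a :: t` of `P` such that `D - V(P)` has a path `l` on more than `|t|` vertices, drop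
`t` and gain `|t| + 1` outside vertices, either by appending a prefix of `l` when `a` has an arc
to the start of `l`, or, when `a` has an arc into another path `q`, by merging `s ++ [a]` with `q`
and adding a prefix of `l` as a new path. Merging uses in-semicompleteness: a path whose end `v`
has an arc into a disjoint path `q` merges with `q` into one path on the union that still ends
where `q` ends, since `v` can be put in front of `q` or between two consecutive vertices of `q`.

If no move applies, label each outside vertex `u` by the order of some outside path starting at
`u`, adjacent outside vertices getting distinct labels (Gallai–Roy). Class `r` consists of the
outside vertices labelled `r` and of the `r`-th last vertex of each path of `P`; the remaining
vertices of `V(P)` are singletons. As no move applies, these classes are stable, every path of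
`P` has at least `r` vertices, and `P` has `k` paths, so class `r` meets all of them.
-/

namespace DigraphPaper

section Paths

variable {V : Type*} {A B : V → V → Prop}

theorem IsPath.ne_nil_s7 {l : List V} (h : IsPath A l) : l ≠ [] := h.1

theorem IsPath.nodup_s7 {l : List V} (h : IsPath A l) : l.Nodup := h.2.1

theorem IsPath.isChain_s7 {l : List V} (h : IsPath A l) : l.IsChain A := h.2.2

theorem isPath_singleton (a : V) : IsPath A [a] :=
  ⟨List.cons_ne_nil _ _, List.nodup_singleton a, List.isChain_singleton a⟩

theorem IsPath.append {p q : List V} (hp : IsPath A p) (hq : IsPath A q) (hpq : p.Disjoint q)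
    (hA : ∀ a ∈ p.getLast?, ∀ b ∈ q.head?, A a b) : IsPath A (p ++ q) :=
  ⟨by simp [hp.ne_nil_s7], hp.nodup_s7.append hq.nodup_s7 hpq, hp.isChain_s7.append hq.isChain_s7 hA⟩

theorem IsPath.left_of_append {p q : List V} (h : IsPath A (p ++ q)) (hp : p ≠ []) :
    IsPath A p :=
  ⟨hp, h.nodup_s7.of_append_left, h.isChain_s7.left_of_append⟩

theorem IsPath.right_of_append {p q : List V} (h : IsPath A (p ++ q)) (hq : q ≠ []) :
    IsPath A q :=
  ⟨hq, h.nodup_s7.of_append_right, h.isChain_s7.right_of_append⟩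

theorem IsPath.prefix_cons {s t : List V} {a : V} (h : IsPath A (s ++ a :: t)) :
    IsPath A (s ++ [a]) :=
  (by simpa using h : IsPath A ((s ++ [a]) ++ t)).left_of_append (by simp)

theorem IsPath.take {l : List V} (h : IsPath A l) {n : ℕ} (hn : n ≠ 0) : IsPath A (l.take n) :=
  ⟨by simp [hn, h.ne_nil_s7], h.nodup_s7.sublist (List.take_sublist _ _), h.isChain_s7.take n⟩

theorem IsPath.mono (hAB : ∀ a b, A a b → B a b) {l : List V} (h : IsPath A l) : IsPath B l :=
  ⟨h.ne_nil_s7, h.nodup_s7, h.isChain_s7.imp fun a b => hAB a b⟩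

theorem pDisjoint_singleton (r : List V) : PDisjoint {r} := by
  intro p hp q hq hpq
  simp only [Finset.mem_singleton] at hp hq
  exact absurd (hp.trans hq.symm) hpq

theorem reflTransGen_of_mem_of_isChain {r : V → V → Prop} {l : List V} (hl : l.IsChain r)
    {v x : V} (hv : v ∈ l.head?) (hx : x ∈ l) : Relation.ReflTransGen r v x := by
  refine hl.induction (Relation.ReflTransGen r v) l (fun _ _ h hy => hy.tail h) (fun hne => ?_) x hx
  rw [List.head?_eq_some_head hne, Option.mem_some_iff] at hv
  rw [hv]

end Paths

section InSemicomplete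

variable {V : Type*} {A : V → V → Prop}

theorem InSemicomplete.exists_insertion (hin : InSemicomplete A) {v b : V} :
    ∀ {q : List V}, q.IsChain A → v ∉ q → b ∈ q → A v b →
      (∀ c ∈ q.head?, A v c) ∨ ∃ s w x t, q = s ++ w :: x :: t ∧ A w v ∧ A v x
  | [], _, _, hb, _ => absurd hb List.not_mem_nil
  | [c], _, _, hb, hvb => Or.inl <| by simpa [List.mem_singleton.1 hb] using hvb
  | c :: z :: t, hq, hv, hb, hvb => by
    rcases List.mem_cons.1 hb with rfl | hb
    · exact Or.inl <| by simpa using hvb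
    rw [List.isChain_cons_cons] at hq
    rcases hin.exists_insertion hq.2 (fun h => hv (.tail _ h)) hb hvb with hz | hmid
    · have hvz : A v z := hz z rfl
      rcases hin z v c hvz hq.1 (fun h => hv (h ▸ List.mem_cons_self)) with hvc | hcv
      · exact Or.inl <| by simpa using hvc
      · exact Or.inr ⟨[], c, z, t, rfl, hcv, hvz⟩
    · obtain ⟨s, w, x, t', hst, hwv, hvx⟩ := hmid
      exact Or.inr ⟨c :: s, w, x, t', by rw [hst]; rfl, hwv, hvx⟩

theorem InSemicomplete.exists_merged_path (hin : InSemicomplete A) {p q : List V} {v b : V}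
    (hp : IsPath A (p ++ [v])) (hq : IsPath A q) (hpq : (p ++ [v]).Disjoint q) (hb : b ∈ q)
    (hvb : A v b) :
    ∃ R, IsPath A R ∧ R.Perm (p ++ [v] ++ q) ∧ R.getLast? = q.getLast? := by
  have hvq : v ∉ q := fun h => hpq (by simp) h
  rcases hin.exists_insertion hq.isChain_s7 hvq hb hvb with hhead | ⟨s, w, x, t, rfl, hwv, hvx⟩
  · exact ⟨_, hp.append hq hpq (by simpa using hhead), .rfl,
      List.getLast?_append_of_ne_nil _ hq.ne_nil_s7⟩
  -- `v` goes between `w` and `x`: merge `s ++ [w]` into `p ++ [v]` first, then append `x :: t`.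
  have hsplit : s ++ w :: x :: t = (s ++ [w]) ++ x :: t := by simp
  rw [hsplit] at hq hpq ⊢
  have hdisj := hq.nodup_s7.disjoint
  obtain ⟨R, hR, hperm, hlast⟩ := hin.exists_merged_path (hq.left_of_append (by simp)) hp
    (List.disjoint_of_subset_left (List.subset_append_left _ _) hpq.symm)
    (by simp : v ∈ p ++ [v]) hwv
  refine ⟨R ++ x :: t, hR.append (hq.right_of_append (by simp)) ?_ ?_, ?_, ?_⟩
  · intro y hyR hyxt
    rcases List.mem_append.1 (hperm.subset hyR) with hy | hy
    · exact hdisj hy hyxt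
    · exact hpq hy (List.mem_append_right _ hyxt)
  · simpa [hlast] using hvx
  · rw [List.perm_iff_count] at hperm ⊢
    intro a
    have := hperm a
    simp only [List.count_append] at this ⊢
    omega
  · simp only [List.getLast?_append_of_ne_nil _ (List.cons_ne_nil _ _)]
termination_by p.length + q.length
decreasing_by subst_vars; simp; omega

end InSemicomplete

section Packs

variable {V : Type*} [DecidableEq V] {A : V → V → Prop} {k : ℕ} {P : Finset (List V)}

@[simp]
theorem mem_cover {x : V} : x ∈ cover P ↔ ∃ p ∈ P, x ∈ p := by simp [cover]

theorem pDisjoint_pair {r s : List V} (hrs : r.Disjoint s) : PDisjoint {r, s} := by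
  intro p hp q hq hpq x hxp hxq
  simp only [Finset.mem_insert, Finset.mem_singleton] at hp hq
  rcases hp with rfl | rfl <;> rcases hq with rfl | rfl
  exacts [hpq rfl, hrs hxp hxq, hrs hxq hxp, hpq rfl]

/-- Paths of `D - V(P)`. -/
def IsPathOutside (A : V → V → Prop) (P : Finset (List V)) (l : List V) : Prop :=
  IsPath A l ∧ ∀ x ∈ l, x ∉ cover P

theorem IsPathOutside.take {l : List V} (hl : IsPathOutside A P l) {n : ℕ} (hn : n ≠ 0) :
    IsPathOutside A P (l.take n) :=
  ⟨hl.1.take hn, fun x hx => hl.2 x (List.mem_of_mem_take hx)⟩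

theorem IsPathOutside.notMem_cover_of_mem_getLast? {l : List V} (hl : IsPathOutside A P l) {x : V}
    (hx : x ∈ l.getLast?) : x ∉ cover P :=
  hl.2 x (List.mem_of_mem_getLast? hx)

def Augmentable (A : V → V → Prop) (k : ℕ) (P : Finset (List V)) : Prop :=
  ∃ Q : Finset (List V), IsKPack A k Q ∧ weight Q = weight P + 1 ∧
    pends Q ⊆ pends P ∪ {v : V | v ∉ cover P}

theorem augmentable_of_exchange (hP : IsKPack A k P) {old new : Finset (List V)}
    (hold : old ⊆ P) (hnew : ∀ r ∈ new, IsPath A r) (hdisj : PDisjoint new)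
    (hsupp : ∀ r ∈ new, ∀ x ∈ r, x ∈ cover old ∨ x ∉ cover P)
    (hw : weight new = weight old + 1) (hcard : P.card + new.card ≤ k + old.card)
    (hends : pends new ⊆ pends P ∪ {v : V | v ∉ cover P}) : Augmentable A k P := by
  have hsep : ∀ r ∈ new, ∀ p ∈ P \ old, ∀ x ∈ r, x ∉ p := by
    intro r hr p hp x hxr hxp
    obtain ⟨hpP, hpo⟩ := Finset.mem_sdiff.1 hp
    rcases hsupp r hr x hxr with hx | hx
    · obtain ⟨o, ho, hxo⟩ := mem_cover.1 hx
      exact hP.2.2 o (hold ho) p hpP (by rintro rfl; exact hpo ho) x hxo hxp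
    · exact hx (mem_cover.2 ⟨p, hpP, hxp⟩)
  have hkept : Disjoint (P \ old) new := Finset.disjoint_left.2 fun r hr hr' => by
    obtain ⟨x, hx⟩ := List.exists_mem_of_ne_nil _ (hnew r hr').ne_nil_s7
    exact hsep r hr' r hr x hx hx
  have hold_card := Finset.card_sdiff_add_card_eq_card hold
  have hold_weight : weight (P \ old) + weight old = weight P := Finset.sum_sdiff hold
  refine ⟨P \ old ∪ new, ⟨?_, ?_, ?_⟩, ?_, ?_⟩
  · rw [Finset.card_union_of_disjoint hkept]
    omega
  · intro r hr
    rcases Finset.mem_union.1 hr with hr | hr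
    exacts [hP.2.1 r (Finset.mem_sdiff.1 hr).1, hnew r hr]
  · intro p hp q hq hpq x hxp hxq
    rcases Finset.mem_union.1 hp with hp | hp <;> rcases Finset.mem_union.1 hq with hq | hq
    exacts [hP.2.2 p (Finset.mem_sdiff.1 hp).1 q (Finset.mem_sdiff.1 hq).1 hpq x hxp hxq,
      hsep q hq p hp x hxq hxp, hsep p hp q hq x hxp hxq, hdisj p hp q hq hpq x hxp hxq]
  · rw [weight, Finset.sum_union hkept, ← weight, ← weight]
    omega
  · rintro x ⟨r, hr, hx⟩
    rcases Finset.mem_union.1 hr with hr | hr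
    exacts [Or.inl ⟨r, (Finset.mem_sdiff.1 hr).1, hx⟩, hends ⟨r, hr, hx⟩]

theorem augmentable_of_replace (hP : IsKPack A k P) {old : Finset (List V)} {r : List V}
    (hold : old ⊆ P) (hr : IsPath A r) (hsupp : ∀ x ∈ r, x ∈ cover old ∨ x ∉ cover P)
    (hw : r.length = weight old + 1) (hcard : P.card + 1 ≤ k + old.card)
    (hend : ∀ x ∈ r.getLast?, x ∈ pends P ∨ x ∉ cover P) : Augmentable A k P :=
  augmentable_of_exchange hP hold (by simpa using hr) (pDisjoint_singleton r) (by simpa using hsupp)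
    (by simpa [weight] using hw) (by simpa using hcard)
    (by rintro x ⟨r', hr', hx⟩; rw [Finset.mem_singleton.1 hr'] at hx; exact hend x hx)

theorem augmentable_of_card_lt (hP : IsKPack A k P) {u : V} (hu : u ∉ cover P)
    (hcard : P.card < k) : Augmentable A k P :=
  augmentable_of_replace hP (Finset.empty_subset P) (isPath_singleton u) (by simpa using hu)
    (by simp [weight]) (by simpa using hcard)
    (fun x hx => .inr (by simp at hx; exact hx ▸ hu))

theorem augmentable_of_length_lt (hP : IsKPack A k P) {p l : List V} (hp : p ∈ P)
    (hl : IsPathOutside A P l) (hlen : p.length < l.length) : Augmentable A k P := by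
  have hl' := hl.take p.length.succ_ne_zero
  refine augmentable_of_replace hP (Finset.singleton_subset_iff.2 hp) hl'.1
    (fun x hx => .inr (hl'.2 x hx)) ?_ (by simpa using hP.1)
    (fun x hx => .inr (hl'.notMem_cover_of_mem_getLast? hx))
  simp [weight]
  omega

theorem augmentable_of_arc_into_cover (hin : InSemicomplete A) (hP : IsKPack A k P) {u x : V}
    {q : List V} (hu : u ∉ cover P) (hq : q ∈ P) (hx : x ∈ q) (hux : A u x) :
    Augmentable A k P := by
  have huq : [u].Disjoint q := by simpa using fun h => hu (mem_cover.2 ⟨q, hq, h⟩)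
  obtain ⟨R, hR, hperm, hlast⟩ :=
    hin.exists_merged_path (p := []) (isPath_singleton u) (hP.2.1 q hq) huq hx hux
  refine augmentable_of_replace hP (Finset.singleton_subset_iff.2 hq) hR ?_ ?_
    (by simpa using hP.1) ?_
  · intro y hy
    rcases List.mem_append.1 (hperm.subset hy) with hy | hy
    · exact .inr (by simpa [List.mem_singleton.1 hy] using hu)
    · exact .inl (by simpa using hy)
  · simp [hperm.length_eq, weight]
  · exact fun y hy => .inl ⟨q, hq, hlast ▸ hy⟩

theorem augmentable_of_arc_out_of_cover (hP : IsKPack A k P) {s t l : List V} {a u : V}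
    (hp : s ++ a :: t ∈ P) (hl : IsPathOutside A P l) (hu : u ∈ l.head?) (hau : A a u)
    (hlen : t.length < l.length) : Augmentable A k P := by
  have hl' := hl.take t.length.succ_ne_zero
  have hsa := (hP.2.1 _ hp).prefix_cons
  have hsap : s ++ [a] ⊆ s ++ a :: t := (List.prefix_append_right_inj s).2 (by simp) |>.subset
  have hhead : (l.take (t.length + 1)).head? = some u := by simpa [List.head?_take] using hu
  refine augmentable_of_replace hP (Finset.singleton_subset_iff.2 hp)
    (r := (s ++ [a]) ++ l.take (t.length + 1)) (hsa.append hl'.1 ?_ ?_) ?_ ?_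
    (by simpa using hP.1) ?_
  · intro x hx hx'
    exact hl'.2 x hx' (mem_cover.2 ⟨_, hp, hsap hx⟩)
  · simpa [hhead] using hau
  · intro x hx
    rcases List.mem_append.1 hx with hx | hx
    exacts [.inl (mem_cover.2 ⟨_, by simp, hsap hx⟩), .inr (hl'.2 x hx)]
  · simp [weight]
    omega
  · intro x hx
    rw [List.getLast?_append_of_ne_nil _ hl'.1.ne_nil_s7] at hx
    exact .inr (hl'.notMem_cover_of_mem_getLast? hx)

theorem augmentable_of_arc_between (hin : InSemicomplete A) (hP : IsKPack A k P)
    {q s t l : List V} {a b : V} (hp : s ++ a :: t ∈ P) (hq : q ∈ P) (hpq : s ++ a :: t ≠ q)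
    (hb : b ∈ q) (hab : A a b) (hl : IsPathOutside A P l) (hlen : t.length < l.length) :
    Augmentable A k P := by
  have hl' := hl.take t.length.succ_ne_zero
  have hsa := (hP.2.1 _ hp).prefix_cons
  have hsap : s ++ [a] ⊆ s ++ a :: t := (List.prefix_append_right_inj s).2 (by simp) |>.subset
  have hsaq : (s ++ [a]).Disjoint q := fun x hx hxq => hP.2.2 _ hp q hq hpq x (hsap hx) hxq
  obtain ⟨R, hR, hperm, hlast⟩ := hin.exists_merged_path hsa (hP.2.1 q hq) hsaq hb hab
  have hRcov : ∀ x ∈ R, x ∈ cover {s ++ a :: t, q} := by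
    intro x hx
    rcases List.mem_append.1 (hperm.subset hx) with hx | hx
    · exact mem_cover.2 ⟨_, by simp, hsap hx⟩
    · exact mem_cover.2 ⟨q, by simp, hx⟩
  have hold : {s ++ a :: t, q} ⊆ P :=
    Finset.insert_subset_iff.2 ⟨hp, Finset.singleton_subset_iff.2 hq⟩
  have hRP : ∀ x ∈ R, x ∈ cover P := fun x hx =>
    Finset.biUnion_subset_biUnion_of_subset_left _ hold (hRcov x hx)
  have hRl : R.Disjoint (l.take (t.length + 1)) := fun x hx hx' => hl'.2 x hx' (hRP x hx)
  have hRne : R ≠ l.take (t.length + 1) := by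
    rintro rfl
    obtain ⟨x, hx⟩ := List.exists_mem_of_ne_nil _ hR.ne_nil_s7
    exact hRl hx hx
  refine augmentable_of_exchange hP hold (new := {R, l.take (t.length + 1)}) ?_
    (pDisjoint_pair hRl) ?_ ?_ ?_ ?_
  · simpa using ⟨hR, hl'.1⟩
  · simp only [Finset.mem_insert, Finset.mem_singleton]
    rintro r (rfl | rfl) x hx
    exacts [.inl (hRcov x hx), .inr (hl'.2 x hx)]
  · rw [weight, weight, Finset.sum_pair hRne, Finset.sum_pair hpq, hperm.length_eq]
    simp
    omega
  · simp [Finset.card_pair hRne, Finset.card_pair hpq, hP.1]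
  · rintro x ⟨r, hr, hx⟩
    simp only [Finset.mem_insert, Finset.mem_singleton] at hr
    rcases hr with rfl | rfl
    exacts [.inl ⟨q, hq, hlast ▸ hx⟩, .inr (hl'.notMem_cover_of_mem_getLast? hx)]

structure IsSaturated (A : V → V → Prop) (k : ℕ) (P : Finset (List V)) : Prop where
  card_eq : ∀ u, u ∉ cover P → P.card = k
  length_le : ∀ p ∈ P, ∀ l, IsPathOutside A P l → l.length ≤ p.length
  arc_between : ∀ s a t, s ++ a :: t ∈ P → ∀ q ∈ P, s ++ a :: t ≠ q → ∀ b ∈ q, A a b →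
    ∀ l, IsPathOutside A P l → l.length ≤ t.length
  no_arc_into : ∀ u, u ∉ cover P → ∀ x ∈ cover P, ¬ A u x
  arc_out : ∀ s a t, s ++ a :: t ∈ P → ∀ l, IsPathOutside A P l → ∀ u ∈ l.head?, A a u →
    l.length ≤ t.length

theorem isSaturated_of_not_augmentable (hin : InSemicomplete A) (hP : IsKPack A k P)
    (hna : ¬ Augmentable A k P) : IsSaturated A k P where
  card_eq u hu := hP.1.antisymm <| not_lt.1 fun h => hna (augmentable_of_card_lt hP hu h)
  length_le p hp l hl := not_lt.1 fun h => hna (augmentable_of_length_lt hP hp hl h)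
  arc_between _ _ _ hp q hq hpq b hb hab l hl := not_lt.1 fun h =>
    hna (augmentable_of_arc_between hin hP hp hq hpq hb hab hl h)
  no_arc_into u hu x hx hux := by
    obtain ⟨q, hq, hxq⟩ := mem_cover.1 hx
    exact hna (augmentable_of_arc_into_cover hin hP hu hq hxq hux)
  arc_out _ _ _ hp l hl u hu hau := not_lt.1 fun h =>
    hna (augmentable_of_arc_out_of_cover hP hp hl hu hau h)

end Packs

section GallaiRoy

variable {V : Type*}

open Relation

def arcRel (S : Finset (V × V)) (a b : V) : Prop := (a, b) ∈ S

theorem transGen_arcRel_insert [DecidableEq V] {S : Finset (V × V)} {u v a b : V}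
    (h : TransGen (arcRel (insert (u, v) S)) a b) :
    TransGen (arcRel S) a b ∨ ReflTransGen (arcRel S) a u ∧ ReflTransGen (arcRel S) v b := by
  induction h with
  | single h =>
    rcases Finset.mem_insert.1 h with h | h
    · obtain ⟨rfl, rfl⟩ := Prod.ext_iff.1 h
      exact .inr ⟨.refl, .refl⟩
    · exact .inl (.single h)
  | tail _ h ih =>
    rcases Finset.mem_insert.1 h with h | h
    · obtain ⟨rfl, rfl⟩ := Prod.ext_iff.1 h
      exact .inr ⟨ih.elim TransGen.to_reflTransGen And.left, .refl⟩
    · exact ih.imp (·.tail h) (And.imp_right (·.tail h))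

noncomputable def arcHeight (S : Finset (V × V)) (u : V) : ℕ :=
  sSup {n | ∃ l, IsPath (arcRel S) l ∧ u ∈ l.head? ∧ l.length = n}

variable [Fintype V] {S : Finset (V × V)}

theorem bddAbove_arcHeight (u : V) :
    BddAbove {n | ∃ l, IsPath (arcRel S) l ∧ u ∈ l.head? ∧ l.length = n} :=
  ⟨Fintype.card V, by rintro _ ⟨l, hl, -, rfl⟩; exact hl.nodup_s7.length_le_card⟩

theorem length_le_arcHeight {l : List V} {u : V} (hl : IsPath (arcRel S) l) (hu : u ∈ l.head?) :
    l.length ≤ arcHeight S u :=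
  le_csSup (bddAbove_arcHeight u) ⟨l, hl, hu, rfl⟩

theorem exists_isPath_length_eq_arcHeight (S : Finset (V × V)) (u : V) :
    ∃ l, IsPath (arcRel S) l ∧ u ∈ l.head? ∧ l.length = arcHeight S u :=
  Nat.sSup_mem (s := {n | ∃ l, IsPath (arcRel S) l ∧ u ∈ l.head? ∧ l.length = n})
    ⟨1, [u], isPath_singleton u, rfl, rfl⟩ (bddAbove_arcHeight u)

theorem arcHeight_lt_of_mem (hS : ∀ x, ¬ TransGen (arcRel S) x x) {u v : V} (huv : (u, v) ∈ S) :
    arcHeight S v < arcHeight S u := by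
  obtain ⟨l, hl, hv, hlen⟩ := exists_isPath_length_eq_arcHeight S v
  have hul : u ∉ l := fun hu =>
    hS u (.head' huv (reflTransGen_of_mem_of_isChain hl.isChain_s7 hv hu))
  have hpath : IsPath (arcRel S) (u :: l) :=
    ⟨List.cons_ne_nil _ _, hl.nodup_s7.cons hul,
      List.isChain_cons.2 ⟨fun w hw => by rwa [← Option.mem_unique hv hw], hl.isChain_s7⟩⟩
  have := length_le_arcHeight hpath rfl
  simp only [List.length_cons] at this
  omega

theorem arcHeight_lt_of_transGen (hS : ∀ x, ¬ TransGen (arcRel S) x x) {u v : V}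
    (h : TransGen (arcRel S) u v) : arcHeight S v < arcHeight S u := by
  induction h with
  | single h => exact arcHeight_lt_of_mem hS h
  | tail _ h ih => exact (arcHeight_lt_of_mem hS h).trans ih

/-- Gallai–Roy; the labels are the heights in a maximal acyclic set of arcs. -/
theorem exists_proper_pathLength_labelling [DecidableEq V] (R : V → V → Prop) :
    ∃ f : V → ℕ, (∀ u v, u ≠ v → R u v → f u ≠ f v) ∧
      ∀ u, ∃ l, IsPath R l ∧ u ∈ l.head? ∧ l.length = f u := by
  let arcs : Finset (V × V) := Finset.univ.filter fun e => R e.1 e.2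
  obtain ⟨S, hS, hmax⟩ := Finset.exists_max_image
    (arcs.powerset.filter fun S => ∀ x, ¬ TransGen (arcRel S) x x) Finset.card
    ⟨∅, by simp [arcRel, TransGen.head'_iff]⟩
  simp only [Finset.mem_filter, Finset.mem_powerset] at hS hmax
  obtain ⟨hSarcs, hSacyc⟩ := hS
  have hSR : ∀ a b, arcRel S a b → R a b := fun a b h => by simpa [arcs] using hSarcs h
  refine ⟨arcHeight S, fun u v huv hR => ?_, fun u => ?_⟩
  · by_cases huvS : (u, v) ∈ S
    · exact (arcHeight_lt_of_mem hSacyc huvS).ne'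
    -- adding the arc `uv` to `S` closes a cycle, which runs through `S` from `v` back to `u`
    obtain ⟨x, hx⟩ : ∃ x, TransGen (arcRel (insert (u, v) S)) x x := by
      by_contra! hacyc
      have := hmax _ ⟨Finset.insert_subset (by simpa [arcs] using hR) hSarcs, hacyc⟩
      rw [Finset.card_insert_of_notMem huvS] at this
      omega
    have hvu : ReflTransGen (arcRel S) v u := by
      rcases transGen_arcRel_insert hx with hx | ⟨hxu, hvx⟩
      exacts [absurd hx (hSacyc x), hvx.trans hxu]
    exact (arcHeight_lt_of_transGen hSacyc
      ((reflTransGen_iff_eq_or_transGen.1 hvu).resolve_left huv)).ne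
  · obtain ⟨l, hl, hu, hlen⟩ := exists_isPath_length_eq_arcHeight S u
    exact ⟨l, hl.mono hSR, hu, hlen⟩

end GallaiRoy

section Coloring

variable {V : Type*} [DecidableEq V] {A : V → V → Prop} {k : ℕ} {P : Finset (List V)}

theorem isColoring_fibers [Fintype V] {ι : Type*} [DecidableEq ι] (col : V → ι)
    (hcol : ∀ x y, x ≠ y → col x = col y → ¬ A x y) :
    IsColoring A (Finset.univ.image fun v => Finset.univ.filter fun w => col w = col v) := by
  simp only [IsColoring, Finset.mem_image, Finset.mem_univ, true_and]
  refine ⟨?_, ?_, ?_, fun v => ⟨_, ⟨v, rfl⟩, by simp⟩⟩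
  · rintro _ ⟨v, rfl⟩ x hx y hy hxy hadj
    simp only [Finset.coe_filter, Finset.mem_univ, true_and, Set.mem_ofPred_eq] at hx hy
    exact hadj.elim (hcol x y hxy (hx.trans hy.symm)) (hcol y x hxy.symm (hy.trans hx.symm))
  · rintro _ ⟨v, rfl⟩
    exact ⟨v, by simp⟩
  · rintro _ ⟨v, rfl⟩ _ ⟨w, rfl⟩ hne
    refine Finset.disjoint_left.2 fun x hxv hxw => hne ?_
    simp only [Finset.mem_filter, Finset.mem_univ, true_and] at hxv hxw
    rw [← hxv, ← hxw]

/-- For `x` on a path `p` of `P`, the position of `x` counted from the end of `p`, the final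
vertex having depth `1`; only `p` contributes to the sum, as `q.idxOf x = q.length` for `x ∉ q`. -/
def depth (P : Finset (List V)) (x : V) : ℕ := ∑ p ∈ P, (p.length - p.idxOf x)

theorem depth_eq (hP : PDisjoint P) {p : List V} (hp : p ∈ P) {x : V} (hx : x ∈ p) :
    depth P x = p.length - p.idxOf x :=
  Finset.sum_eq_single_of_mem p hp fun q hq hqp => by
    rw [List.idxOf_eq_length_iff.2 (hP p hp q hq (Ne.symm hqp) x hx), Nat.sub_self]

theorem depth_pos {x : V} (hx : x ∈ cover P) : 0 < depth P x := by
  obtain ⟨p, hp, hxp⟩ := mem_cover.1 hx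
  have := List.idxOf_lt_length_iff.2 hxp
  exact (Nat.sub_pos_of_lt this).trans_le
    (Finset.single_le_sum (f := fun p : List V => p.length - p.idxOf x) (by simp) hp)

theorem depth_append_cons (hP : PDisjoint P) {s t : List V} {x : V} (hp : s ++ x :: t ∈ P)
    (hnd : (s ++ x :: t).Nodup) : depth P x = t.length + 1 := by
  have hxs : x ∉ s := fun hxs => List.disjoint_of_nodup_append hnd hxs List.mem_cons_self
  rw [depth_eq hP hp (by simp), List.idxOf_append_of_notMem hxs]
  simp

theorem depth_getElem (hP : PDisjoint P) {p : List V} (hp : p ∈ P) (hnd : p.Nodup) {i : ℕ}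
    (hi : i < p.length) : depth P p[i] = p.length - i := by
  rw [depth_eq hP hp (List.getElem_mem hi), hnd.idxOf_getElem]

theorem eq_of_depth_eq (hP : PDisjoint P) {p : List V} (hp : p ∈ P) {x y : V}
    (hx : x ∈ p) (hy : y ∈ p) (h : depth P x = depth P y) : x = y := by
  rw [depth_eq hP hp hx, depth_eq hP hp hy] at h
  have := List.idxOf_lt_length_iff.2 hx
  have := List.idxOf_lt_length_iff.2 hy
  exact (List.idxOf_inj hx).1 (by omega)

structure IsLevelling (A : V → V → Prop) (P : Finset (List V)) (f : V → ℕ) : Prop where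
  ne_of_adj : ∀ u v, u ≠ v → A u v → u ∉ cover P → v ∉ cover P → f u ≠ f v
  exists_path : ∀ u, u ∉ cover P → ∃ l, IsPathOutside A P l ∧ u ∈ l.head? ∧ l.length = f u

theorem exists_isLevelling [Fintype V] (A : V → V → Prop) (P : Finset (List V)) :
    ∃ f, IsLevelling A P f := by
  obtain ⟨f, hf_ne, hf_path⟩ :=
    exists_proper_pathLength_labelling fun u v => A u v ∧ u ∉ cover P ∧ v ∉ cover P
  refine ⟨f, fun u v huv hA hu hv => hf_ne u v huv ⟨hA, hu, hv⟩, fun u hu => ?_⟩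
  obtain ⟨l, hl, hul, hlen⟩ := hf_path u
  refine ⟨l, ⟨hl.mono fun _ _ h => h.1, ?_⟩, hul, hlen⟩
  refine hl.isChain_s7.induction _ l (fun _ _ h _ => h.2.2) fun hne => ?_
  rw [List.head?_eq_some_head hne, Option.mem_some_iff] at hul
  rwa [hul]

noncomputable def packColor (A : V → V → Prop) (P : Finset (List V)) (f : V → ℕ) (x : V) :
    ℕ ⊕ V :=
  if x ∉ cover P then .inl (f x)
  else if ∃ l, IsPathOutside A P l ∧ depth P x ≤ l.length then .inl (depth P x)
  else .inr x

variable {f : V → ℕ} {x : V}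

theorem packColor_of_notMem_cover (hx : x ∉ cover P) : packColor A P f x = .inl (f x) :=
  if_pos hx

theorem packColor_of_depth_le (hx : x ∈ cover P) {l : List V} (hl : IsPathOutside A P l)
    (h : depth P x ≤ l.length) : packColor A P f x = .inl (depth P x) := by
  rw [packColor, if_neg (not_not.2 hx), if_pos ⟨l, hl, h⟩]

theorem packColor_eq_inr {y : V} (h : packColor A P f x = .inr y) : y = x ∧ x ∈ cover P := by
  unfold packColor at h
  split_ifs at h with hx
  exact ⟨(Sum.inr.inj h).symm, hx⟩

theorem packColor_eq_inl_of_mem_cover (hx : x ∈ cover P) {r : ℕ}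
    (h : packColor A P f x = .inl r) :
    r = depth P x ∧ ∃ l, IsPathOutside A P l ∧ r ≤ l.length := by
  rw [packColor, if_neg (not_not.2 hx)] at h
  split_ifs at h with hl
  obtain rfl := Sum.inl.inj h
  exact ⟨rfl, hl⟩

theorem packColor_eq_inl (hf : IsLevelling A P f) {r : ℕ} (h : packColor A P f x = .inl r) :
    0 < r ∧ ∃ l, IsPathOutside A P l ∧ r ≤ l.length := by
  by_cases hx : x ∈ cover P
  · obtain ⟨rfl, hl⟩ := packColor_eq_inl_of_mem_cover hx h
    exact ⟨depth_pos hx, hl⟩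
  · obtain ⟨l, hl, -, hlen⟩ := hf.exists_path x hx
    obtain rfl : f x = r := Sum.inl.inj ((packColor_of_notMem_cover hx).symm.trans h)
    exact ⟨hlen ▸ List.length_pos_of_ne_nil hl.1.ne_nil_s7, l, hl, hlen.ge⟩

theorem packColor_not_adj (hP : IsKPack A k P) (hS : IsSaturated A k P) (hf : IsLevelling A P f)
    (x y : V) (hxy : x ≠ y) (hcol : packColor A P f x = packColor A P f y) : ¬ A x y := by
  intro hA
  by_cases hx : x ∈ cover P
  · obtain ⟨p, hp, hxp⟩ := mem_cover.1 hx
    obtain ⟨s, t, rfl⟩ := List.append_of_mem hxp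
    have hdepth := depth_append_cons hP.2.2 hp (hP.2.1 _ hp).nodup_s7
    by_cases hy : y ∈ cover P
    · obtain ⟨q, hq, hyq⟩ := mem_cover.1 hy
      cases hc : packColor A P f x with
      | inr z =>
        exact hxy ((packColor_eq_inr hc).1.symm.trans (packColor_eq_inr (hcol ▸ hc)).1)
      | inl r =>
        obtain ⟨rfl, l, hl, hrl⟩ := packColor_eq_inl_of_mem_cover hx hc
        obtain ⟨hxy_depth, -⟩ := packColor_eq_inl_of_mem_cover hy (hcol ▸ hc)
        by_cases hpq : s ++ x :: t = q
        · exact hxy (eq_of_depth_eq hP.2.2 hp hxp (hpq ▸ hyq) hxy_depth)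
        · have := hS.arc_between s x t hp q hq hpq y hyq hA l hl
          omega
    · obtain ⟨l, hl, hyl, hlen⟩ := hf.exists_path y hy
      rw [packColor_of_notMem_cover hy] at hcol
      have := (packColor_eq_inl_of_mem_cover hx hcol).1
      have := hS.arc_out s x t hp l hl y hyl hA
      omega
  · by_cases hy : y ∈ cover P
    · exact hS.no_arc_into x hx y hy hA
    · rw [packColor_of_notMem_cover hx, packColor_of_notMem_cover hy] at hcol
      exact hf.ne_of_adj x y hxy hA hx hy (Sum.inl.inj hcol)

theorem orthoCP_fibers_packColor [Fintype V] (hP : IsKPack A k P) (hS : IsSaturated A k P)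
    (hf : IsLevelling A P f) :
    OrthoCP k (Finset.univ.image fun v =>
      Finset.univ.filter fun w => packColor A P f w = packColor A P f v) P := by
  simp only [OrthoCP, Finset.mem_image, Finset.mem_univ, true_and]
  rintro _ ⟨v, rfl⟩
  cases hc : packColor A P f v with
  | inr z =>
    obtain ⟨rfl, hz⟩ := packColor_eq_inr hc
    obtain ⟨p, hp, hzp⟩ := mem_cover.1 hz
    have hsingle : (Finset.univ.filter fun w => packColor A P f w = .inr z).card ≤ 1 :=
      Finset.card_le_one.2 fun a ha b hb => by
        simp only [Finset.mem_filter, Finset.mem_univ, true_and] at ha hb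
        exact (packColor_eq_inr ha).1.symm.trans (packColor_eq_inr hb).1
    calc _ ≤ 1 := (min_le_left _ _).trans hsingle
      _ ≤ _ := Finset.one_le_card.2 ⟨p, Finset.mem_filter.2 ⟨hp, z, by simp [hc], hzp⟩⟩
  | inl r =>
    obtain ⟨hr, l, hl, hrl⟩ := packColor_eq_inl hf hc
    obtain ⟨u, hu⟩ := List.exists_mem_of_ne_nil _ hl.1.ne_nil_s7
    rw [Finset.filter_true_of_mem (s := P) fun p hp => ?_, hS.card_eq u (hl.2 u hu)]
    · exact min_le_right _ _
    have hrp := hrl.trans (hS.length_le p hp l hl)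
    have hi : p.length - r < p.length := by omega
    have hcov : p[p.length - r] ∈ cover P := mem_cover.2 ⟨p, hp, List.getElem_mem hi⟩
    have hdepth := depth_getElem hP.2.2 hp (hP.2.1 p hp).nodup_s7 hi
    refine ⟨p[p.length - r], ?_, List.getElem_mem hi⟩
    simp only [Finset.mem_filter, Finset.mem_univ, true_and]
    rw [packColor_of_depth_le hcov hl (by omega), hdepth]
    congr 1
    omega

theorem exists_coloring_orthoCP [Fintype V] (hP : IsKPack A k P) (hS : IsSaturated A k P) :
    ∃ C, IsColoring A C ∧ OrthoCP k C P := by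
  obtain ⟨f, hf⟩ := exists_isLevelling A P
  exact ⟨_, isColoring_fibers _ (packColor_not_adj hP hS hf), orthoCP_fibers_packColor hP hS hf⟩

end Coloring

variable {V : Type*} [Fintype V] [DecidableEq V]

theorem stmt7_general (A : V → V → Prop) (hin : InSemicomplete A)
    (k : ℕ) (P : Finset (List V)) (hP : IsKPack A k P) :
    (∃ C : Finset (Finset V), IsColoring A C ∧ OrthoCP k C P) ∨
    (∃ Q : Finset (List V), IsKPack A k Q ∧ weight Q = weight P + 1 ∧
      pends Q ⊆ pends P ∪ {v : V | v ∉ cover P}) := by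
  by_cases h : Augmentable A k P
  · exact .inr h
  · exact .inl (exists_coloring_orthoCP hP (isSaturated_of_not_augmentable hin hP h))

/-- Theorem: any k-pack of an in-semicomplete digraph has an orthogonal
coloring or can be turned into a heavier k-pack. -/
theorem stmt7 (A : V → V → Prop) (hirr : Irreflexive A) (hin : InSemicomplete A)
    (k : ℕ) (hk : 0 < k) (P : Finset (List V)) (hP : IsKPack A k P) :
    (∃ C : Finset (Finset V), IsColoring A C ∧ OrthoCP k C P) ∨
    (∃ Q : Finset (List V), IsKPack A k Q ∧ weight Q = weight P + 1 ∧
      pends Q ⊆ pends P ∪ {v : V | v ∉ cover P}) :=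
  stmt7_general A hin k P hP

end DigraphPaper
end
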